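/- arXiv:1204.4738 — 9 statements merged into one kernel-verified Lean document; each statement's English description precedes it below -/
import Mathlib

section
/- For every positive real z, the polynomial λ^k − z^{-1}(λ^{k−1} + ⋯ + λ + 1) (for integer k ≥ 2) has no repeated complex roots. -/
/-!
Multiplying by `X - 1` turns `P = X^k - c (X^{k-1} + ⋯ + 1)` into the trinomial
`Q = X^{k+1} - (1 + c) X^k + c`. A double root `x` of `P` is a double root of `Q`, and
eliminating between `Q(x) = 0` and `x Q'(x) = 0` gives `x^{k+1} = k c` and `(k + 1) x = k (1 + c)`.
For real `c > 0` this makes `x` a positive real with `x^{k+1} + k = (k + 1) x`, which by the strict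
Bernoulli inequality forces `x = 1`. But `P(1)` and `P'(1)` cannot vanish together, since
`2 P'(1) - (k - 1) P(1) = k + 1`.
-/

open Polynomial Finset

lemma sum_range_natCast_mul_two {R : Type*} [CommRing R] (n : ℕ) :
    (∑ i ∈ range n, (i : R)) * 2 = n * (n - 1) := by
  have h := congrArg (Nat.cast (R := R)) (sum_range_id_mul_two n)
  rcases n with _ | n
  · simp
  · push_cast at h
    simpa using h

lemma Polynomial.roots_nodup_of_forall_isRoot_not_isRoot_derivative {R : Type*} [CommRing R]
    [IsDomain R] {p : R[X]} (h : ∀ x, p.IsRoot x → ¬ (derivative p).IsRoot x) :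
    p.roots.Nodup := by
  classical
  rcases eq_or_ne p 0 with rfl | hp
  · simp
  refine Multiset.nodup_iff_count_le_one.2 fun x => ?_
  rw [count_roots, ← not_lt, one_lt_rootMultiplicity_iff_isRoot hp]
  exact fun ⟨hx, hx'⟩ => h x hx hx'

lemma X_mul_derivative_X_pow {R : Type*} [CommRing R] (k : ℕ) :
    X * derivative (X ^ k : R[X]) = C (k : R) * X ^ k := by
  rcases k with _ | k
  · simp
  · rw [derivative_X_pow, pow_succ]
    push_cast
    ring

lemma eq_one_of_pow_succ_add_eq {x : ℝ} {k : ℕ} (hk : k ≠ 0) (hx : 0 ≤ x)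
    (h : x ^ (k + 1) + k = (k + 1) * x) : x = 1 := by
  by_contra hx1
  have hp : (1 : ℝ) < (k + 1 : ℕ) := by norm_cast; omega
  have := one_add_mul_self_lt_rpow_one_add (by linarith : -1 ≤ x - 1) (sub_ne_zero.2 hx1) hp
  rw [add_sub_cancel, Real.rpow_natCast] at this
  push_cast at this
  linarith

-- For `c = 1` this is the characteristic polynomial of the `k`-bonacci recurrence.
noncomputable def kbonacciPoly {R : Type*} [CommRing R] (k : ℕ) (c : R) : R[X] :=
  X ^ k - C c * ∑ i ∈ range k, X ^ i

section CommRing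

variable {R : Type*} [CommRing R] (k : ℕ) (c : R)

lemma X_sub_one_mul_kbonacciPoly :
    (X - 1) * kbonacciPoly k c = X ^ (k + 1) - C (1 + c) * X ^ k + C c := by
  have hgeom : (∑ i ∈ range k, X ^ i) * (X - 1) = (X ^ k - 1 : R[X]) := geom_sum_mul X k
  rw [kbonacciPoly, C_add, C_1]
  linear_combination (-C c) * hgeom

lemma kbonacciPoly_eval_one : (kbonacciPoly k c).eval 1 = 1 - c * k := by
  simp [kbonacciPoly, eval_finsetSum]

lemma kbonacciPoly_derivative_eval_one :
    (derivative (kbonacciPoly k c)).eval 1 = k - c * ∑ i ∈ range k, (i : R) := by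
  simp [kbonacciPoly, derivative_X_pow, eval_finsetSum]

variable {k c}

lemma not_isRoot_derivative_kbonacciPoly_one [CharZero R] (h : (kbonacciPoly k c).IsRoot 1) :
    ¬ (derivative (kbonacciPoly k c)).IsRoot 1 := by
  intro h'
  rw [IsRoot, kbonacciPoly_eval_one] at h
  rw [IsRoot, kbonacciPoly_derivative_eval_one] at h'
  have hk : (k : R) + 1 = 0 := by
    linear_combination 2 * h' - (k - 1 : R) * h + c * sum_range_natCast_mul_two (R := R) k
  exact Nat.cast_add_one_ne_zero k hk

lemma X_mul_derivative_X_sub_one_mul_kbonacciPoly :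
    X * derivative ((X - 1) * kbonacciPoly k c) =
      C ((k : R) + 1) * X ^ (k + 1) - C ((1 + c) * k) * X ^ k := by
  rw [X_sub_one_mul_kbonacciPoly, derivative_add, derivative_sub, derivative_C_mul,
    derivative_C, add_zero, mul_sub, mul_left_comm, X_mul_derivative_X_pow,
    X_mul_derivative_X_pow, C_mul]
  push_cast
  ring

lemma pow_eq_of_isRoot_kbonacciPoly_of_isRoot_derivative {x : R}
    (h : (kbonacciPoly k c).IsRoot x) (h' : (derivative (kbonacciPoly k c)).IsRoot x) :
    x ^ (k + 1) = k * c ∧ x ^ k * (1 + c) = (k + 1) * c := by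
  have hQ : ((X - 1) * kbonacciPoly k c).eval x = 0 := by rw [eval_mul, h.eq_zero, mul_zero]
  have hQ' : (X * derivative ((X - 1) * kbonacciPoly k c)).eval x = 0 := by
    rw [derivative_mul, eval_mul, eval_add, eval_mul, eval_mul, h.eq_zero, h'.eq_zero]
    ring
  rw [X_sub_one_mul_kbonacciPoly] at hQ
  rw [X_mul_derivative_X_sub_one_mul_kbonacciPoly] at hQ'
  simp only [eval_add, eval_sub, eval_mul, eval_C, eval_X, eval_pow] at hQ hQ'
  constructor
  · linear_combination hQ' - (k : R) * hQ
  · linear_combination hQ' - (k + 1 : R) * hQ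

end CommRing

lemma eq_one_of_pow_succ_eq_of_pow_mul_eq {k : ℕ} {c : ℝ} (hc : 0 < c) {x : ℂ}
    (h₁ : x ^ (k + 1) = k * c) (h₂ : x ^ k * (1 + c) = (k + 1) * c) : x = 1 := by
  rcases eq_or_ne k 0 with rfl | hk
  · simp at h₂
  have hc' : (c : ℂ) ≠ 0 := Complex.ofReal_ne_zero.2 hc.ne'
  have hlin : (k + 1) * x = k * (1 + c) := by
    have : (c : ℂ) * ((k + 1) * x - k * (1 + c)) = 0 := by
      linear_combination (1 + (c : ℂ)) * h₁ - x * h₂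
    linear_combination (mul_eq_zero.1 this).resolve_left hc'
  set r : ℝ := k * (1 + c) / (k + 1) with hr_def
  have hxr : x = r := by
    rw [hr_def]
    push_cast
    rw [eq_div_iff (by exact_mod_cast k.succ_ne_zero)]
    linear_combination hlin
  have hr : r ^ (k + 1) + k = (k + 1) * r := by
    have : (r : ℂ) ^ (k + 1) + k = (k + 1) * r := by
      rw [← hxr]
      linear_combination h₁ - hlin
    exact_mod_cast this
  rw [hxr, eq_one_of_pow_succ_add_eq hk (by positivity) hr, Complex.ofReal_one]

theorem kbonacciPoly_roots_nodup (k : ℕ) {c : ℝ} (hc : 0 < c) :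
    (kbonacciPoly k (c : ℂ)).roots.Nodup := by
  refine roots_nodup_of_forall_isRoot_not_isRoot_derivative fun x h h' => ?_
  obtain ⟨h₁, h₂⟩ := pow_eq_of_isRoot_kbonacciPoly_of_isRoot_derivative h h'
  obtain rfl := eq_one_of_pow_succ_eq_of_pow_mul_eq hc h₁ h₂
  exact not_isRoot_derivative_kbonacciPoly_one h h'

theorem stmt_0_general (k : ℕ) (z : ℝ) (hz : 0 < z) :
    ((X ^ k - C ((z : ℂ))⁻¹ * ∑ i ∈ Finset.range k, X ^ i : Polynomial ℂ)).roots.Nodup := by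
  rw [← Complex.ofReal_inv]
  exact kbonacciPoly_roots_nodup k (inv_pos.2 hz)

/-- For every positive real `z`, the polynomial `λ^k - z⁻¹ (λ^{k-1} + ⋯ + λ + 1)`
(with `k ≥ 2`) has no repeated complex roots. -/
theorem stmt_0 (k : ℕ) (hk : 2 ≤ k) (z : ℝ) (hz : 0 < z) :
    ((X ^ k - C ((z : ℂ))⁻¹ * ∑ i ∈ Finset.range k, X ^ i : Polynomial ℂ)).roots.Nodup :=
  stmt_0_general k z hz
end

section
/- If λ is a repeated root of λ^k − z^{-1}(λ^{k−1} + ⋯ + λ + 1) for some z ≠ 0, then λ = k(1 + z^{-1})/(k+1). -/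
open Polynomial

/-- If `λ` is a repeated root (a common root of `P` and `P'`) of
`P(λ) = λ^k - z⁻¹ (λ^{k-1} + ⋯ + λ + 1)` for some `z ≠ 0`, then
`λ = k (1 + z⁻¹) / (k + 1)`. -/
theorem stmt_2 (k : ℕ) (hk : 2 ≤ k) (z : ℂ) (hz : z ≠ 0) (l : ℂ)
    (hroot : (X ^ k - C z⁻¹ * ∑ i ∈ Finset.range k, X ^ i : Polynomial ℂ).IsRoot l)
    (hroot' : ((X ^ k - C z⁻¹ * ∑ i ∈ Finset.range k, X ^ i : Polynomial ℂ).derivative).IsRoot l) :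
    l = (k : ℂ) * (1 + z⁻¹) / ((k : ℂ) + 1) := by
  set P : Polynomial ℂ := X ^ k - C z⁻¹ * ∑ i ∈ Finset.range k, X ^ i with hP
  -- l ≠ 0 since P(0) = -z⁻¹ ≠ 0
  have hne : l ≠ 0 := by
    intro h0
    rw [h0] at hroot
    have hk0 : k ≠ 0 := by omega
    simp [IsRoot, hP, zero_pow hk0, zero_geom_sum, hk0] at hroot
    exact hz hroot
  -- geometric sum identity
  have hg : (X - 1 : Polynomial ℂ) * ∑ i ∈ Finset.range k, X ^ i = X ^ k - 1 := by
    rw [mul_comm]; exact geom_sum_mul X k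
  have hQ2 : (X - 1) * P = X ^ (k + 1) - X ^ k - C z⁻¹ * (X ^ k - 1) := by
    rw [hP]
    linear_combination (-(C z⁻¹ : Polynomial ℂ)) * hg
  -- l is a root of the derivative of (X-1)*P
  have hQ : (((X - 1) * P).derivative).IsRoot l := by
    rw [derivative_mul]
    simp only [IsRoot, eval_add, eval_mul]
    rw [hroot.eq_zero, hroot'.eq_zero]
    ring
  rw [hQ2] at hQ
  simp only [IsRoot, derivative_sub, derivative_mul, derivative_C, derivative_one,
    derivative_X_pow, eval_sub, eval_mul, eval_pow, eval_C, eval_X, eval_natCast,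
    zero_mul, eval_zero, zero_add, sub_zero, Nat.add_sub_cancel] at hQ
  -- hQ : (k+1) * l^k - k * l^(k-1) - z⁻¹ * (k * l^(k-1) - 0) = 0 (roughly)
  have hpow : l ^ k = l ^ (k - 1) * l := by
    conv_lhs => rw [show k = (k - 1) + 1 by omega, pow_succ]
  have hc : l ^ (k - 1) ≠ 0 := pow_ne_zero _ hne
  have key : (((k : ℂ) + 1) * l) * l ^ (k - 1) = ((k : ℂ) * (1 + z⁻¹)) * l ^ (k - 1) := by
    push_cast at hQ
    rw [hpow] at hQ
    linear_combination hQ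
  have key2 : ((k : ℂ) + 1) * l = (k : ℂ) * (1 + z⁻¹) := mul_right_cancel₀ hc key
  have hk1 : ((k : ℂ) + 1) ≠ 0 := Nat.cast_add_one_ne_zero k
  rw [eq_div_iff hk1]
  linear_combination key2
end

section
/- The eigenvalues of the k×k matrix m(z) whose first row is all ones, whose subdiagonal entries are all equal to z, and all other entries zero, are exactly z·λ where λ ranges over the roots of λ^k − z^{-1}(λ^{k−1} + ⋯ + λ + 1). -/
/-!
With `μ = z * l` and `z ≠ 0`, the subdiagonal rows of `m(z) v = μ v` say `v i = l * v (i + 1)`,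
so an eigenvector is a multiple of `(l ^ (k - 1), …, l, 1)`; the first row then says exactly
`1 + l + ⋯ + l ^ (k - 1) = z * l ^ k`, which is the root condition after multiplying by `z⁻¹`.
-/

open Polynomial Finset

theorem Fin.forall_castSucc_eq_mul_succ_iff {R : Type*} [CommMonoid R] {n : ℕ}
    (v : Fin (n + 1) → R) (l : R) :
    (∀ i : Fin n, v i.castSucc = l * v i.succ) ↔ ∀ i, v i = l ^ (n - i) * v (Fin.last n) := by
  constructor
  · intro h i
    induction i using Fin.reverseInduction with
    | last => simp
    | cast i ih =>
      rw [h, ih, ← mul_assoc, ← pow_succ', Fin.val_succ, Fin.val_castSucc]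
      congr 2
      omega
  · intro h i
    rw [h i.castSucc, h i.succ, ← mul_assoc, ← pow_succ', Fin.val_succ, Fin.val_castSucc]
    congr 2
    omega

theorem Fin.sum_pow_sub_eq_sum_range {R : Type*} [Semiring R] (n : ℕ) (l : R) :
    ∑ i : Fin (n + 1), l ^ (n - i) = ∑ i ∈ range (n + 1), l ^ i := by
  rw [Fin.sum_univ_eq_sum_range (fun i => l ^ (n - i)), ← sum_range_reflect (fun i => l ^ i)]
  simp

variable {K : Type*} [Field K]

theorem Polynomial.isRoot_X_pow_sub_C_inv_mul_sum_iff {z : K} (hz : z ≠ 0) (k : ℕ) (l : K) :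
    (X ^ k - C z⁻¹ * ∑ i ∈ range k, X ^ i : K[X]).IsRoot l ↔ ∑ i ∈ range k, l ^ i = z * l ^ k := by
  simp only [IsRoot, eval_sub, eval_mul, eval_C, eval_pow, eval_X, eval_finsetSum, sub_eq_zero]
  rw [eq_inv_mul_iff_mul_eq₀ hz, eq_comm]

namespace Matrix

theorem mem_spectrum_iff_exists_mulVec_eq_smul {n : Type*} [Fintype n] [DecidableEq n]
    (A : Matrix n n K) (μ : K) : μ ∈ spectrum K A ↔ ∃ v ≠ 0, A *ᵥ v = μ • v := by
  rw [← spectrum_toLin', ← Module.End.hasEigenvalue_iff_mem_spectrum,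
    Module.End.hasEigenvalue_iff, Submodule.ne_bot_iff]
  simp only [Module.End.mem_eigenspace_iff, toLin'_apply]
  exact ⟨fun ⟨v, hv, h0⟩ => ⟨v, h0, hv⟩, fun ⟨v, h0, hv⟩ => ⟨v, hv, h0⟩⟩

/-- The Leslie matrix with all fecundities `1` and all survival rates `z`; this is `m(z)`. -/
def leslie (z : K) (k : ℕ) : Matrix (Fin k) (Fin k) K :=
  of fun i j => if (i : ℕ) = 0 then 1 else if (i : ℕ) = (j : ℕ) + 1 then z else 0

variable {z : K} {n : ℕ}

theorem leslie_mulVec_zero (v : Fin (n + 1) → K) : (leslie z (n + 1) *ᵥ v) 0 = ∑ j, v j := by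
  simp [leslie, mulVec, dotProduct]

theorem leslie_mulVec_succ (v : Fin (n + 1) → K) (i : Fin n) :
    (leslie z (n + 1) *ᵥ v) i.succ = z * v i.castSucc := by
  rw [mulVec, dotProduct, sum_eq_single i.castSucc]
  · simp [leslie]
  · intro j _ hj
    have : (i : ℕ) ≠ j := fun h => hj (Fin.ext h.symm)
    simp [leslie, this]
  · simp

theorem leslie_mulVec_eq_smul_iff (v : Fin (n + 1) → K) (μ : K) :
    leslie z (n + 1) *ᵥ v = μ • v ↔
      ∑ j, v j = μ * v 0 ∧ ∀ i : Fin n, z * v i.castSucc = μ * v i.succ := by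
  simp only [funext_iff, Fin.forall_fin_succ, leslie_mulVec_zero, leslie_mulVec_succ,
    Pi.smul_apply, smul_eq_mul]

theorem mul_mem_spectrum_leslie_succ_iff (hz : z ≠ 0) (l : K) :
    z * l ∈ spectrum K (leslie z (n + 1)) ↔ ∑ i ∈ range (n + 1), l ^ i = z * l ^ (n + 1) := by
  simp only [mem_spectrum_iff_exists_mulVec_eq_smul, leslie_mulVec_eq_smul_iff, mul_assoc,
    mul_right_inj' hz, Fin.forall_castSucc_eq_mul_succ_iff]
  constructor
  · rintro ⟨v, hv0, hsum, hv⟩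
    have hlast : v (Fin.last n) ≠ 0 := fun h => hv0 (funext fun i => by simp [hv i, h])
    rw [← Fin.sum_pow_sub_eq_sum_range, pow_succ', ← mul_assoc]
    refine mul_right_cancel₀ hlast ?_
    calc (∑ i : Fin (n + 1), l ^ (n - i)) * v (Fin.last n)
        = ∑ i, v i := by rw [sum_mul]; exact sum_congr rfl fun i _ => (hv i).symm
      _ = z * (l * v 0) := hsum
      _ = z * l * l ^ n * v (Fin.last n) := by rw [hv 0, Fin.val_zero, Nat.sub_zero]; ring
  · intro h
    refine ⟨fun i => l ^ (n - i), fun h0 => by simpa using congrFun h0 (Fin.last n), ?_, by simp⟩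
    simp [Fin.sum_pow_sub_eq_sum_range, h, pow_succ']

theorem mul_mem_spectrum_leslie_iff (hz : z ≠ 0) (k : ℕ) (l : K) :
    z * l ∈ spectrum K (leslie z k) ↔ ∑ i ∈ range k, l ^ i = z * l ^ k := by
  obtain _ | n := k
  · simp [hz.symm]
  · exact mul_mem_spectrum_leslie_succ_iff hz l

end Matrix

theorem stmt_4_general (k : ℕ) (z : ℂ) (hz : z ≠ 0) :
    ∀ μ : ℂ,
      μ ∈ spectrum ℂ
        (Matrix.of fun i j : Fin k =>
          if (i : ℕ) = 0 then (1 : ℂ) else if (i : ℕ) = (j : ℕ) + 1 then z else 0) ↔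
      ∃ l : ℂ,
        (X ^ k - C z⁻¹ * ∑ i ∈ Finset.range k, X ^ i : Polynomial ℂ).IsRoot l ∧ μ = z * l := by
  intro μ
  constructor
  · intro hμ
    refine ⟨μ / z, ?_, (mul_div_cancel₀ μ hz).symm⟩
    rw [isRoot_X_pow_sub_C_inv_mul_sum_iff hz, ← Matrix.mul_mem_spectrum_leslie_iff hz,
      mul_div_cancel₀ μ hz]
    exact hμ
  · rintro ⟨l, hl, rfl⟩
    exact (Matrix.mul_mem_spectrum_leslie_iff hz k l).2
      ((isRoot_X_pow_sub_C_inv_mul_sum_iff hz k l).1 hl)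

/-- The eigenvalues of the `k × k` matrix `m(z)` (first row all ones, subdiagonal
entries `z`, other entries `0`) are exactly `z·λ` where `λ` ranges over the roots of
`λ^k - z⁻¹ (λ^{k-1} + ⋯ + λ + 1)`. -/
theorem stmt_4 (k : ℕ) (hk : 2 ≤ k) (z : ℂ) (hz : z ≠ 0) :
    ∀ μ : ℂ,
      μ ∈ spectrum ℂ
        (Matrix.of fun i j : Fin k =>
          if (i : ℕ) = 0 then (1 : ℂ) else if (i : ℕ) = (j : ℕ) + 1 then z else 0) ↔
      ∃ l : ℂ,
        (X ^ k - C z⁻¹ * ∑ i ∈ Finset.range k, X ^ i : Polynomial ℂ).IsRoot l ∧ μ = z * l :=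
  stmt_4_general k z hz
end

section
/- For 0 < s < 1 and q = e^{-s}, the probability that no k consecutive events among C_1, C_2, … all fail equals G_k(q)/G(q), where G_k is the generating function of partitions with no k-sequence and G is the generating function of all partitions. -/
/-!
Put `q = e^{-s}`, so that `Cₙ` fails with probability `qⁿ`. Since `∑ qⁿ < ∞`, by Borel–Cantelli
the set `F` of failing indices is almost surely finite, and by independence
`P(F = B) = P(F = ∅) ∏_{b ∈ B} q^b / (1 - q^b)` for every finite `B ⊆ {1, 2, …}`.
A partition is a finite set `B` of part sizes together with a multiplicity `≥ 1` for each of them,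
so `∏_{b ∈ B} q^b / (1 - q^b)` is the generating function of the partitions with set of part sizes
`B`. Summing over the `B` with no `k` consecutive elements gives `P(A_k) = P(F = ∅) G_k(q)`, and
summing over all `B` gives `1 = P(F = ∅) G(q)`.
-/

open MeasureTheory ProbabilityTheory

/-- The number of partitions of `n` with no `k` parts of consecutive sizes. -/
noncomputable def noKSeqPartitions (k n : ℕ) : ℕ :=
  Nat.card {p : Nat.Partition n // ∀ j : ℕ, 1 ≤ j → ∃ i < k, (j + i) ∉ p.parts}

open scoped ENNReal

def NoKSeq (k : ℕ) (S : Set ℕ) : Prop := ∀ j, 1 ≤ j → ∃ i < k, j + i ∉ S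

theorem noKSeqPartitions_eq_card (k n : ℕ) :
    noKSeqPartitions k n = Nat.card {p : n.Partition // NoKSeq k ↑p.parts.toFinset} :=
  Nat.card_congr (Equiv.subtypeEquivRight fun p => by simp [NoKSeq])

namespace Multiset

def toFinsetInsertEquiv {α : Type*} [DecidableEq α] {a : α} {B : Finset α} (ha : a ∉ B) :
    ℕ × {M : Multiset α // M.toFinset = B} ≃ {M : Multiset α // M.toFinset = insert a B} where
  toFun x := ⟨replicate (x.1 + 1) a + x.2.1, by
    rw [toFinset_add, x.2.2, toFinset_replicate, if_neg (Nat.succ_ne_zero _), Finset.insert_eq]⟩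
  invFun M := (M.1.count a - 1, ⟨M.1.filter (· ≠ a), by
    rw [toFinset_filter, M.2, Finset.filter_insert, if_neg (by simp),
      Finset.filter_true_of_mem fun b hb => ne_of_mem_of_not_mem hb ha]⟩)
  left_inv := by
    rintro ⟨m, M, hM⟩
    have haM : a ∉ M := by rw [← mem_toFinset, hM]; exact ha
    refine Prod.ext ?_ (Subtype.ext ?_)
    · simp [count_eq_zero.2 haM]
    · change (replicate (m + 1) a + M).filter (· ≠ a) = M
      rw [filter_add, filter_eq_nil.2 fun x hx => not_not.2 (eq_of_mem_replicate hx), zero_add,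
        filter_eq_self.2 fun x hx => ne_of_mem_of_not_mem hx haM]
  right_inv := by
    rintro ⟨M, hM⟩
    have haM : 0 < M.count a :=
      count_pos.2 (by rw [← mem_toFinset, hM]; exact Finset.mem_insert_self a B)
    refine Subtype.ext ?_
    change replicate (M.count a - 1 + 1) a + M.filter (fun x => ¬x = a) = M
    rw [Nat.sub_add_cancel haM, ← filter_eq', filter_add_not]

theorem tsum_pow_sum_of_toFinset_eq (Q : ℝ≥0∞) (B : Finset ℕ) :
    ∑' M : {M : Multiset ℕ // M.toFinset = B}, Q ^ M.1.sum = ∏ b ∈ B, Q ^ b / (1 - Q ^ b) := by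
  induction B using Finset.induction_on with
  | empty =>
    have : Subsingleton {M : Multiset ℕ // M.toFinset = ∅} :=
      ⟨fun M N => Subtype.ext <| by rw [toFinset_eq_empty.1 M.2, toFinset_eq_empty.1 N.2]⟩
    rw [tsum_eq_single ⟨0, rfl⟩ fun M hM => absurd (Subsingleton.elim M _) hM]
    simp
  | insert a B ha ih =>
    rw [← (toFinsetInsertEquiv ha).tsum_eq, ENNReal.tsum_prod', Finset.prod_insert ha, ← ih,
      div_eq_mul_inv, ← ENNReal.tsum_geometric_add_one, ← ENNReal.tsum_mul_right]
    refine tsum_congr fun m => ?_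
    rw [← ENNReal.tsum_mul_left]
    refine tsum_congr fun M => ?_
    simp [toFinsetInsertEquiv, pow_add, pow_mul, mul_comm, mul_assoc]

end Multiset

theorem ENNReal.tsum_preimage_eq_tsum_fiberwise {α β : Type*} (f : α → β) (g : α → ℝ≥0∞)
    (S : Set β) : ∑' a : f ⁻¹' S, g a = ∑' b : S, ∑' a : f ⁻¹' {b.1}, g a := by
  rw [tsum_subtype (f ⁻¹' S) g, tsum_subtype S (fun b => ∑' a : f ⁻¹' {b}, g a),
    ← ENNReal.tsum_fiberwise _ f]
  refine tsum_congr fun b => ?_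
  by_cases hb : b ∈ S
  · rw [Set.indicator_of_mem hb]
    refine tsum_congr fun a => Set.indicator_of_mem ?_ g
    rwa [Set.mem_preimage, show f a = b from a.2]
  · rw [Set.indicator_of_notMem hb]
    refine ENNReal.tsum_eq_zero.2 fun a => Set.indicator_of_notMem ?_ g
    rwa [Set.mem_preimage, show f a = b from a.2]

namespace Nat.Partition

def sigmaSubtypeEquiv (P : Multiset ℕ → Prop) :
    (Σ n : ℕ, {p : n.Partition // P p.parts}) ≃ {M : Multiset ℕ // (∀ i ∈ M, 0 < i) ∧ P M} where
  toFun x := ⟨x.2.1.parts, fun _ => x.2.1.parts_pos, x.2.2⟩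
  invFun M := ⟨M.1.sum, ⟨M.1, M.2.1 _, rfl⟩, M.2.2⟩
  left_inv := by rintro ⟨_, ⟨_, _, rfl⟩, _⟩; rfl
  right_inv _ := rfl

theorem tsum_card_subtype_mul_pow (Q : ℝ≥0∞) (P : Set ℕ → Prop) :
    ∑' n, (Nat.card {p : n.Partition // P ↑p.parts.toFinset} : ℝ≥0∞) * Q ^ n =
      ∑' B : {B : Finset ℕ // ↑B ⊆ Set.Ioi 0 ∧ P ↑B}, ∏ b ∈ B.1, Q ^ b / (1 - Q ^ b) := by
  have hpos : ∀ M : Multiset ℕ, (∀ i ∈ M, 0 < i) ∧ P ↑M.toFinset ↔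
      M ∈ Multiset.toFinset ⁻¹' {B | ↑B ⊆ Set.Ioi 0 ∧ P ↑B} := by
    intro M; simp [Set.subset_def]
  calc ∑' n, (Nat.card {p : n.Partition // P ↑p.parts.toFinset} : ℝ≥0∞) * Q ^ n
      = ∑' x : Σ n : ℕ, {p : n.Partition // P ↑p.parts.toFinset}, Q ^ x.1 := by
        rw [ENNReal.tsum_sigma']
        refine tsum_congr fun n => ?_
        rw [show ∑' _ : {p : n.Partition // P ↑p.parts.toFinset}, Q ^ n = _ from
          ENNReal.tsum_const _, ENat.card_eq_coe_natCard]
        rfl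
    _ = ∑' M : Multiset.toFinset ⁻¹' {B | ↑B ⊆ Set.Ioi 0 ∧ P ↑B}, Q ^ M.1.sum :=
        ((sigmaSubtypeEquiv _).trans (Equiv.subtypeEquivRight hpos)).symm.tsum_eq
          (fun x => Q ^ x.1) |>.symm
    _ = _ := by
        rw [ENNReal.tsum_preimage_eq_tsum_fiberwise _ (fun M : Multiset ℕ => Q ^ M.sum)]
        exact tsum_congr fun B => Multiset.tsum_pow_sum_of_toFinset_eq Q B

end Nat.Partition

section Failures

variable {ι Ω : Type*} {C : ι → Set Ω} {I : Set ι}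

def failures (C : ι → Set Ω) (I : Set ι) (ω : Ω) : Set ι := {i ∈ I | ω ∉ C i}

theorem setOf_failures_eq_coe {B : Finset ι} (hB : ↑B ⊆ I) :
    {ω | failures C I ω = ↑B} = (⋂ b ∈ B, (C b)ᶜ) ∩ ⋂ i ∈ I \ ↑B, C i := by
  ext ω
  simp only [failures, Set.ext_iff, Set.mem_ofPred_eq, Finset.mem_coe, Set.mem_inter_iff,
    Set.mem_iInter, Set.mem_compl_iff, Set.mem_sdiff]
  constructor
  · intro h
    exact ⟨fun b hb => ((h b).2 hb).2,
      fun i ⟨hi, hiB⟩ => by_contra fun hC => hiB ((h i).1 ⟨hi, hC⟩)⟩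
  · rintro ⟨hBC, hIC⟩ i
    exact ⟨fun ⟨hi, hC⟩ => by_contra fun hiB => hC (hIC i ⟨hi, hiB⟩),
      fun hiB => ⟨hB hiB, hBC i hiB⟩⟩

theorem setOf_failures_eq_empty_eq_inter {B : Finset ι} (hB : ↑B ⊆ I) :
    {ω | failures C I ω = ∅} = (⋂ b ∈ B, C b) ∩ ⋂ i ∈ I \ ↑B, C i := by
  ext ω
  simp only [failures, Set.eq_empty_iff_forall_notMem, Set.mem_ofPred_eq, not_and, not_not,
    Set.mem_inter_iff, Set.mem_iInter, Set.mem_sdiff]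
  exact ⟨fun h => ⟨fun b hb => h b (hB hb), fun i hi => h i hi.1⟩,
    fun ⟨hBC, hIC⟩ i hi => (em (i ∈ B)).elim (hBC i) fun hiB => hIC i ⟨hi, hiB⟩⟩

variable [MeasurableSpace Ω] {μ : Measure Ω}

theorem measurableSet_setOf_failures_eq [Countable ι] (hC : ∀ i, MeasurableSet (C i))
    {B : Finset ι} (hB : ↑B ⊆ I) : MeasurableSet {ω | failures C I ω = ↑B} := by
  rw [setOf_failures_eq_coe hB]
  exact (B.measurableSet_biInter fun b _ => (hC b).compl).inter
    (.biInter (Set.to_countable _) fun i _ => hC i)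

theorem ProbabilityTheory.iIndepSet.measure_biInter_compl (hind : iIndepSet C μ) (S : Finset ι) :
    μ (⋂ i ∈ S, (C i)ᶜ) = ∏ i ∈ S, μ (C i)ᶜ :=
  ((iIndepSet_iff_iIndep C μ).1 hind).meas_biInter fun _ _ =>
    (MeasurableSpace.measurableSet_generateFrom (Set.mem_singleton _)).compl

theorem measure_setOf_failures_eq_coe [Countable ι] (hC : ∀ i, MeasurableSet (C i))
    (hind : iIndepSet C μ) {B : Finset ι} (hB : ↑B ⊆ I) (hpos : ∀ b ∈ B, μ (C b) ≠ 0) :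
    μ {ω | failures C I ω = ↑B} =
      μ {ω | failures C I ω = ∅} * ∏ b ∈ B, μ (C b)ᶜ / μ (C b) := by
  have := hind.isProbabilityMeasure
  set Y := ⋂ i ∈ I \ ↑B, C i
  have hindep := hind.indep_generateFrom_of_disjoint hC ↑B (I \ ↑B) Set.disjoint_sdiff_right
  have hY : MeasurableSet[.generateFrom {t | ∃ i ∈ I \ ↑B, C i = t}] Y :=
    .biInter (Set.to_countable _) fun i hi => .basic _ ⟨i, hi, rfl⟩
  have hCB : ∀ b ∈ B, MeasurableSet[.generateFrom {t | ∃ i ∈ (↑B : Set ι), C i = t}] (C b) :=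
    fun b hb => .basic _ ⟨b, hb, rfl⟩
  have hfail : μ {ω | failures C I ω = ↑B} = (∏ b ∈ B, μ (C b)ᶜ) * μ Y := by
    rw [setOf_failures_eq_coe hB, (hindep.indepSet_of_measurableSet
      (B.measurableSet_biInter fun b hb => (hCB b hb).compl) hY).measure_inter_eq_mul,
      hind.measure_biInter_compl]
  have hnofail : μ {ω | failures C I ω = ∅} = (∏ b ∈ B, μ (C b)) * μ Y := by
    rw [setOf_failures_eq_empty_eq_inter hB, (hindep.indepSet_of_measurableSet
      (B.measurableSet_biInter hCB) hY).measure_inter_eq_mul, hind.meas_biInter]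
  rw [hfail, hnofail, mul_right_comm, ← Finset.prod_mul_distrib]
  congr 1
  exact Finset.prod_congr rfl fun b hb =>
    (ENNReal.mul_div_cancel (hpos b hb) (measure_ne_top μ _)).symm

theorem ae_finite_failures [Countable ι] (h : ∑' i, μ (C i)ᶜ ≠ ∞) :
    ∀ᵐ ω ∂μ, (failures C I ω).Finite :=
  (ae_finite_setOfPred_mem h).mono fun _ hω => hω.subset fun _ hi => hi.2

theorem measure_setOf_failures_eq_tsum [Countable ι] (hC : ∀ i, MeasurableSet (C i))
    (hfin : ∀ᵐ ω ∂μ, (failures C I ω).Finite) (P : Set ι → Prop) :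
    μ {ω | P (failures C I ω)} =
      ∑' B : {B : Finset ι // ↑B ⊆ I ∧ P ↑B}, μ {ω | failures C I ω = ↑B.1} := by
  have hae : {ω | P (failures C I ω)} =ᵐ[μ]
      ⋃ B : {B : Finset ι // ↑B ⊆ I ∧ P ↑B}, {ω | failures C I ω = ↑B.1} := by
    refine Filter.eventuallyEq_set.2 ?_
    filter_upwards [hfin] with ω hω
    simp only [Set.mem_ofPred_eq, Set.mem_iUnion]
    refine ⟨fun hP => ⟨⟨hω.toFinset, ?_, ?_⟩, hω.coe_toFinset.symm⟩, ?_⟩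
    · rw [hω.coe_toFinset]; exact Set.sep_subset _ _
    · rwa [hω.coe_toFinset]
    · rintro ⟨B, hB⟩
      exact hB ▸ B.2.2
  rw [measure_congr hae, measure_iUnion _ fun B => measurableSet_setOf_failures_eq hC B.2.1]
  exact fun B B' hne => Set.disjoint_left.2 fun ω h h' =>
    hne (Subtype.ext (Finset.coe_injective (h.symm.trans h')))

end Failures

theorem biInter_biUnion_eq_setOf_noKSeq_failures {Ω : Type*} (C : ℕ → Set Ω) (k : ℕ) :
    ⋂ i ∈ {i : ℕ | 1 ≤ i}, ⋃ j ∈ Finset.range k, C (i + j) =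
      {ω | NoKSeq k (failures C (Set.Ioi 0) ω)} := by
  ext ω
  simp only [Set.mem_iInter, Set.mem_iUnion, Finset.mem_range, Set.mem_ofPred_eq, NoKSeq,
    failures, Set.mem_Ioi, not_and, not_not, exists_prop]
  exact forall₂_congr fun j hj => exists_congr fun i => and_congr_right fun _ =>
    ⟨fun h _ => h, fun h => h (by omega)⟩

section FailureProbabilities

variable {Ω : Type*} [MeasurableSpace Ω] {μ : Measure Ω} {C : ℕ → Set Ω} {Q : ℝ≥0∞}

theorem measure_setOf_failures_eq_mul_tsum (hC : ∀ n, MeasurableSet (C n))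
    (hind : iIndepSet C μ) (hQ : Q < 1) (hCc : ∀ n, 0 < n → μ (C n)ᶜ = Q ^ n)
    (P : Set ℕ → Prop) :
    μ {ω | P (failures C (Set.Ioi 0) ω)} = μ {ω | failures C (Set.Ioi 0) ω = ∅} *
      ∑' n, (Nat.card {p : n.Partition // P ↑p.parts.toFinset} : ℝ≥0∞) * Q ^ n := by
  have := hind.isProbabilityMeasure
  have hCc_le : ∀ n, μ (C n)ᶜ ≤ Q ^ n := by
    rintro (_ | n)
    · simpa using prob_le_one
    · exact (hCc _ n.succ_pos).le
  have hsum : ∑' n, μ (C n)ᶜ ≠ ∞ := by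
    refine ne_top_of_le_ne_top ?_ (ENNReal.tsum_le_tsum hCc_le)
    rw [ENNReal.tsum_geometric]
    exact ENNReal.inv_ne_top.2 (tsub_pos_of_lt hQ).ne'
  have hCn : ∀ n, 0 < n → μ (C n) = 1 - Q ^ n := fun n hn => by
    rw [← hCc n hn, prob_compl_eq_one_sub (hC n), ENNReal.sub_sub_cancel ENNReal.one_ne_top
      prob_le_one]
  rw [measure_setOf_failures_eq_tsum hC (ae_finite_failures hsum),
    Nat.Partition.tsum_card_subtype_mul_pow, ← ENNReal.tsum_mul_left]
  refine tsum_congr fun B => ?_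
  rw [measure_setOf_failures_eq_coe hC hind B.2.1 fun b hb => ?_]
  · refine congrArg _ (Finset.prod_congr rfl fun b hb => ?_)
    rw [hCc b (B.2.1 hb), hCn b (B.2.1 hb)]
  · rw [hCn b (B.2.1 hb)]
    exact (tsub_pos_of_lt (pow_lt_one₀ zero_le hQ (B.2.1 hb).ne')).ne'

theorem measure_setOf_failures_eq_div (hC : ∀ n, MeasurableSet (C n))
    (hind : iIndepSet C μ) (hQ : Q < 1) (hCc : ∀ n, 0 < n → μ (C n)ᶜ = Q ^ n)
    (P : Set ℕ → Prop) :
    μ {ω | P (failures C (Set.Ioi 0) ω)} =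
      (∑' n, (Nat.card {p : n.Partition // P ↑p.parts.toFinset} : ℝ≥0∞) * Q ^ n) /
        ∑' n, (Fintype.card n.Partition : ℝ≥0∞) * Q ^ n := by
  have := hind.isProbabilityMeasure
  have hone := measure_setOf_failures_eq_mul_tsum hC hind hQ hCc fun _ => True
  simp only [Set.ofPred_true, measure_univ, Nat.card_eq_fintype_card,
    Fintype.card_subtype_true] at hone
  rw [measure_setOf_failures_eq_mul_tsum hC hind hQ hCc, ENNReal.eq_inv_of_mul_eq_one_left
    hone.symm, div_eq_mul_inv, mul_comm]

end FailureProbabilities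

-- Both sides vanish when the series diverges.
theorem tsum_natCast_mul_pow_eq_toReal (a : ℕ → ℕ) {q : ℝ} (hq : 0 ≤ q) :
    ∑' n, (a n : ℝ) * q ^ n = (∑' n, (a n : ℝ≥0∞) * ENNReal.ofReal q ^ n).toReal := by
  rw [ENNReal.tsum_toReal_eq fun n => by finiteness]
  simp [ENNReal.toReal_ofReal hq]

theorem stmt_11_general {Ω : Type*} [MeasurableSpace Ω] (μ : Measure Ω) [IsProbabilityMeasure μ]
    (k : ℕ) (s : ℝ) (hs0 : 0 < s)
    (C : ℕ → Set Ω) (hmeas : ∀ n, MeasurableSet (C n))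
    (hindep : iIndepSet C μ)
    (hprob : ∀ n : ℕ, 1 ≤ n → μ (C n) = ENNReal.ofReal (1 - Real.exp (-(n : ℝ) * s))) :
    μ (⋂ i ∈ {i : ℕ | 1 ≤ i}, ⋃ j ∈ Finset.range k, C (i + j)) =
      ENNReal.ofReal
        ((∑' n : ℕ, (noKSeqPartitions k n : ℝ) * Real.exp (-s) ^ n) /
          (∑' n : ℕ, ((Fintype.card (Nat.Partition n) : ℝ) * Real.exp (-s) ^ n))) := by
  have hq := (Real.exp_pos (-s)).le
  have hQ : ENNReal.ofReal (Real.exp (-s)) < 1 := by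
    simpa using Real.exp_lt_one_iff.2 (neg_lt_zero.2 hs0)
  have hCc : ∀ n, 0 < n → μ (C n)ᶜ = ENNReal.ofReal (Real.exp (-s)) ^ n := fun n hn => by
    have hle : Real.exp (-(n : ℝ) * s) ≤ 1 :=
      Real.exp_le_one_iff.2 (by simp only [neg_mul, neg_nonpos]; positivity)
    rw [prob_compl_eq_one_sub (hmeas n), hprob n hn, ← ENNReal.ofReal_one,
      ← ENNReal.ofReal_sub _ (sub_nonneg.2 hle), sub_sub_cancel, ← ENNReal.ofReal_pow hq,
      ← Real.exp_nat_mul]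
    ring_nf
  simp only [noKSeqPartitions_eq_card, tsum_natCast_mul_pow_eq_toReal _ hq]
  rw [← ENNReal.toReal_div, biInter_biUnion_eq_setOf_noKSeq_failures,
    ← measure_setOf_failures_eq_div hmeas hindep hQ hCc, ENNReal.ofReal_toReal (measure_ne_top μ _)]

/-- For `0 < s < 1` and `q = e^{-s}`: if `C₁, C₂, …` are independent events with
`P(Cₙ) = 1 - e^{-ns}`, then the probability that there is no run of `k` consecutive
events among the `Cₙ` that all fail equals `G_k(q)/G(q)`, where `G_k` is the
generating function of partitions with no `k`-sequence and `G` that of all partitions. -/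
theorem stmt_11 {Ω : Type*} [MeasurableSpace Ω] (μ : Measure Ω) [IsProbabilityMeasure μ]
    (k : ℕ) (hk : 2 ≤ k) (s : ℝ) (hs0 : 0 < s) (hs1 : s < 1)
    (C : ℕ → Set Ω) (hmeas : ∀ n, MeasurableSet (C n))
    (hindep : iIndepSet C μ)
    (hprob : ∀ n : ℕ, 1 ≤ n → μ (C n) = ENNReal.ofReal (1 - Real.exp (-(n : ℝ) * s))) :
    μ (⋂ i ∈ {i : ℕ | 1 ≤ i}, ⋃ j ∈ Finset.range k, C (i + j)) =
      ENNReal.ofReal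
        ((∑' n : ℕ, (noKSeqPartitions k n : ℝ) * Real.exp (-s) ^ n) /
          (∑' n : ℕ, ((Fintype.card (Nat.Partition n) : ℝ) * Real.exp (-s) ^ n))) :=
  stmt_11_general μ k s hs0 C hmeas hindep hprob
end

section
/- The vectors ṽ^k_i(N), defined as generating functions over partitions with parts ≤ N, no k consecutive part sizes, containing parts of sizes N, N−1, …, N−i+1 but no part of size N−i, satisfy the recursion ṽ^k_0(N) = ∑_{j=0}^{k−1} ṽ^k_j(N−1) and ṽ^k_i(N) = z(N)·ṽ^k_{i−1}(N−1) for 1 ≤ i ≤ k−1, where z(N) = q^N/(1 − q^N). -/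
set_option maxHeartbeats 1000000

open Set


/-- The generating function `ṽ^k_i(N)`: sum of `q^{|λ|}` over partitions `λ`
(encoded as multisets of parts) with all parts in `[1, N]`, no `k` parts of
consecutive sizes, parts of each size `N, N-1, …, N-i+1` present and no part of
size `N - i`. -/
noncomputable def vtilde (k N i : ℕ) (q : ℝ) : ℝ :=
  ∑' m : {m : Multiset ℕ //
      (∀ p ∈ m, 1 ≤ p ∧ p ≤ N) ∧
      (∀ j : ℕ, 1 ≤ j → ∃ t < k, (j + t) ∉ m) ∧
      (∀ j < i, (N - j) ∈ m) ∧ (N - i) ∉ m},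
    q ^ (Multiset.sum m.1)

-- multiset split lemma
lemma msplit (a : ℕ) (m : Multiset ℕ) :
    Multiset.filter (· ≠ a) m + (m.count a) • ({a} : Multiset ℕ) = m := by
  ext b
  by_cases hb : b = a <;>
    simp [Multiset.count_filter, Multiset.count_nsmul, Multiset.count_singleton, hb]

lemma mem_addsmul {a x : ℕ} {m : Multiset ℕ} {c : ℕ} :
    x ∈ m + c • ({a} : Multiset ℕ) ↔ x ∈ m ∨ (c ≠ 0 ∧ x = a) := by
  simp [Multiset.mem_nsmul]

def splitEquiv (a : ℕ) (P Q : Multiset ℕ → Prop) (R : ℕ → Prop)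
    (HQ : ∀ m, Q m → a ∉ m)
    (H : ∀ (m : Multiset ℕ) (c : ℕ), a ∉ m → (P (m + c • {a}) ↔ Q m ∧ R c)) :
    {m : Multiset ℕ // P m} ≃ {c : ℕ // R c} × {m : Multiset ℕ // Q m} where
  toFun m := by
    have hna : a ∉ Multiset.filter (· ≠ a) m.1 := by
      simp [Multiset.mem_filter]
    have := m.2
    rw [← msplit a m.1] at this
    rw [H _ _ hna] at this
    exact (⟨m.1.count a, this.2⟩, ⟨m.1.filter (· ≠ a), this.1⟩)
  invFun p := ⟨p.2.1 + p.1.1 • {a}, (H _ _ (HQ _ p.2.2)).mpr ⟨p.2.2, p.1.2⟩⟩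
  left_inv m := by
    apply Subtype.ext
    exact msplit a m.1
  right_inv p := by
    have hna : a ∉ p.2.1 := HQ _ p.2.2
    refine Prod.ext (Subtype.ext ?_) (Subtype.ext ?_)
    · simp only []
      rw [Multiset.count_add, Multiset.count_nsmul, Multiset.count_singleton]
      simp [Multiset.count_eq_zero_of_notMem hna]
    · simp only []
      rw [Multiset.filter_add]
      have h1 : Multiset.filter (· ≠ a) p.2.1 = p.2.1 :=
        Multiset.filter_eq_self.mpr (fun b hb => by rintro rfl; exact hna hb)
      have h2 : Multiset.filter (· ≠ a) (p.1.1 • ({a} : Multiset ℕ)) = 0 := by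
        rw [Multiset.filter_nsmul]
        simp [Multiset.filter_singleton]
      rw [h1, h2, add_zero]

lemma splitEquiv_app (a : ℕ) (P Q : Multiset ℕ → Prop) (R : ℕ → Prop)
    (HQ : ∀ m, Q m → a ∉ m)
    (H : ∀ (m : Multiset ℕ) (c : ℕ), a ∉ m → (P (m + c • {a}) ↔ Q m ∧ R c))
    (q : ℝ) (p : {c : ℕ // R c} × {m : Multiset ℕ // Q m}) :
    q ^ (((splitEquiv a P Q R HQ H).symm p).1.sum) = q ^ (a * p.1.1) * q ^ (p.2.1.sum) := by
  have : ((splitEquiv a P Q R HQ H).symm p).1 = p.2.1 + p.1.1 • {a} := rfl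
  rw [this, Multiset.sum_add, Multiset.nsmul_singleton, Multiset.sum_replicate, pow_add,
    smul_eq_mul, mul_comm p.1.1 a, mul_comm]

lemma split_summable_tsum (a : ℕ) (P Q : Multiset ℕ → Prop) (R : ℕ → Prop)
    (HQ : ∀ m, Q m → a ∉ m)
    (H : ∀ (m : Multiset ℕ) (c : ℕ), a ∉ m → (P (m + c • {a}) ↔ Q m ∧ R c))
    (q : ℝ) (hq0 : 0 ≤ q)
    (hR : Summable (fun c : {c : ℕ // R c} => q ^ (a * c.1)))
    (hQs : Summable (fun m : {m : Multiset ℕ // Q m} => q ^ (Multiset.sum m.1))) :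
    Summable (fun m : {m : Multiset ℕ // P m} => q ^ (Multiset.sum m.1)) ∧
    (∑' m : {m : Multiset ℕ // P m}, q ^ (Multiset.sum m.1))
      = (∑' c : {c : ℕ // R c}, q ^ (a * c.1)) *
        (∑' m : {m : Multiset ℕ // Q m}, q ^ (Multiset.sum m.1)) := by
  set e := (splitEquiv a P Q R HQ H).symm with he
  have hprod : Summable (fun p : {c : ℕ // R c} × {m : Multiset ℕ // Q m} =>
      q ^ (a * p.1.1) * q ^ (Multiset.sum p.2.1)) := by
    have h1 : 0 ≤ (fun c : {c : ℕ // R c} => q ^ (a * c.1)) := fun c => pow_nonneg hq0 _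
    have h2 : 0 ≤ (fun m : {m : Multiset ℕ // Q m} => q ^ (Multiset.sum m.1)) :=
      fun m => pow_nonneg hq0 _
    exact hR.mul_of_nonneg hQs h1 h2
  have hfun : (fun p : {c : ℕ // R c} × {m : Multiset ℕ // Q m} =>
      q ^ (Multiset.sum (e p).1)) = fun p => q ^ (a * p.1.1) * q ^ (Multiset.sum p.2.1) := by
    funext p; exact splitEquiv_app a P Q R HQ H q p
  have hs : Summable (fun m : {m : Multiset ℕ // P m} => q ^ (Multiset.sum m.1)) := by
    rw [← e.summable_iff]
    show Summable (fun p => q ^ (Multiset.sum (e p).1))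
    rw [hfun]; exact hprod
  refine ⟨hs, ?_⟩
  rw [← e.tsum_eq (fun m : {m : Multiset ℕ // P m} => q ^ (Multiset.sum m.1))]
  show (∑' p, q ^ (Multiset.sum (e p).1)) = _
  rw [hfun, ← Summable.tsum_mul_tsum hR hQs hprod]

lemma summable_master (N : ℕ) {q : ℝ} (hq0 : 0 < q) (hq1 : q < 1) :
    Summable (fun m : {m : Multiset ℕ // ∀ p ∈ m, 1 ≤ p ∧ p ≤ N} =>
      q ^ (Multiset.sum m.1)) := by
  induction N with
  | zero =>
    have : Subsingleton {m : Multiset ℕ // ∀ p ∈ m, 1 ≤ p ∧ p ≤ 0} := by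
      constructor
      rintro ⟨a, ha⟩ ⟨b, hb⟩
      have h0 : ∀ m : Multiset ℕ, (∀ p ∈ m, 1 ≤ p ∧ p ≤ 0) → m = 0 := by
        intro m hm
        refine Multiset.eq_zero_of_forall_notMem (fun x hx => ?_)
        have := hm x hx; omega
      exact Subtype.ext ((h0 a ha).trans (h0 b hb).symm)
    exact .of_finite
  | succ n ih =>
    have HQ : ∀ m : Multiset ℕ, (∀ p ∈ m, 1 ≤ p ∧ p ≤ n) → (n+1) ∉ m := by
      intro m hm hmem
      have := hm _ hmem; omega
    have H : ∀ (m : Multiset ℕ) (c : ℕ), (n+1) ∉ m →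
        ((∀ p ∈ m + c • ({n+1} : Multiset ℕ), 1 ≤ p ∧ p ≤ n+1) ↔
          (∀ p ∈ m, 1 ≤ p ∧ p ≤ n) ∧ True) := by
      intro m c hna
      constructor
      · intro h
        refine ⟨fun p hp => ?_, trivial⟩
        have := h p (mem_addsmul.mpr (Or.inl hp))
        have hne : p ≠ n+1 := fun he => hna (he ▸ hp)
        omega
      · rintro ⟨h, -⟩ p hp
        rcases mem_addsmul.mp hp with hp | ⟨-, rfl⟩
        · have := h p hp; omega
        · omega
    have hR' : Summable (fun c : ℕ => q ^ ((n+1) * c)) := by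
      have he : (fun c : ℕ => q ^ ((n+1) * c)) = fun c => (q ^ (n+1)) ^ c := by
        funext c; rw [← pow_mul]
      rw [he]
      exact summable_geometric_of_lt_one (pow_nonneg hq0.le _)
        (pow_lt_one₀ hq0.le hq1 (by omega))
    have hR : Summable (fun c : {c : ℕ // True} => q ^ ((n+1) * c.1)) :=
      ((Equiv.subtypeUnivEquiv (fun _ => trivial)).summable_iff).mpr hR'
    exact (split_summable_tsum (n+1) _ _ _ HQ H q hq0.le hR ih).1

lemma summable_indicator_subset {N : ℕ} {q : ℝ} (hq0 : 0 < q) (hq1 : q < 1)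
    (s : Set (Multiset ℕ)) (hs : ∀ m ∈ s, ∀ p ∈ m, 1 ≤ p ∧ p ≤ N) :
    Summable (s.indicator (fun m : Multiset ℕ => q ^ Multiset.sum m)) := by
  have master : Summable (Set.indicator {m : Multiset ℕ | ∀ p ∈ m, 1 ≤ p ∧ p ≤ N}
      (fun m : Multiset ℕ => q ^ Multiset.sum m)) :=
    summable_subtype_iff_indicator.mp (summable_master N hq0 hq1)
  have h2 := master.indicator s
  rw [Set.indicator_indicator] at h2
  have h3 : s ∩ {m : Multiset ℕ | ∀ p ∈ m, 1 ≤ p ∧ p ≤ N} = s :=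
    Set.inter_eq_left.mpr hs
  rwa [h3] at h2

def vset (k N i : ℕ) : Set (Multiset ℕ) :=
  {m | (∀ p ∈ m, 1 ≤ p ∧ p ≤ N) ∧
      (∀ j : ℕ, 1 ≤ j → ∃ t < k, (j + t) ∉ m) ∧
      (∀ j < i, (N - j) ∈ m) ∧ (N - i) ∉ m}

lemma vtilde_eq_tsum (k N i : ℕ) (q : ℝ) :
    vtilde k N i q = ∑' m : Multiset ℕ,
      (vset k N i).indicator (fun m : Multiset ℕ => q ^ Multiset.sum m) m :=
  tsum_subtype (vset k N i) (fun m : Multiset ℕ => q ^ Multiset.sum m)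

lemma summable_vset (k N i : ℕ) {q : ℝ} (hq0 : 0 < q) (hq1 : q < 1) :
    Summable (fun m : {m : Multiset ℕ // m ∈ vset k N i} => q ^ (Multiset.sum m.1)) :=
  summable_subtype_iff_indicator.mpr
    (summable_indicator_subset hq0 hq1 _ (fun m hm => hm.1))

lemma Hmain (k N i : ℕ) (hk : 2 ≤ k) (hN : 1 ≤ N) (hi1 : 1 ≤ i) (hi2 : i ≤ k - 1)
    (m : Multiset ℕ) (c : ℕ) (hna : N ∉ m) :
    ((m + c • ({N} : Multiset ℕ)) ∈ vset k N i ↔ m ∈ vset k (N-1) (i-1) ∧ 1 ≤ c) := by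
  constructor
  · rintro ⟨h1, h2, h3, h4⟩
    have hNmem : N ∈ m + c • ({N} : Multiset ℕ) := by
      have := h3 0 (by omega)
      simpa using this
    have hc : 1 ≤ c := by
      rcases mem_addsmul.mp hNmem with h | ⟨h, -⟩
      · exact absurd h hna
      · omega
    refine ⟨⟨?_, ?_, ?_, ?_⟩, hc⟩
    · intro p hp
      have hb := h1 p (mem_addsmul.mpr (Or.inl hp))
      have hne : p ≠ N := fun he => hna (he ▸ hp)
      omega
    · intro j hj
      obtain ⟨t, ht, hmem⟩ := h2 j hj
      exact ⟨t, ht, fun hx => hmem (mem_addsmul.mpr (Or.inl hx))⟩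
    · intro j hj
      have hmem := h3 (j+1) (by omega)
      rcases mem_addsmul.mp hmem with h | ⟨-, he⟩
      · rwa [show N - 1 - j = N - (j+1) from by omega]
      · exact absurd he (by omega)
    · intro hx
      rw [show N - 1 - (i-1) = N - i from by omega] at hx
      exact h4 (mem_addsmul.mpr (Or.inl hx))
  · rintro ⟨⟨h1, h2, h3, h4⟩, hc⟩
    refine ⟨?_, ?_, ?_, ?_⟩
    · intro p hp
      rcases mem_addsmul.mp hp with h | ⟨-, rfl⟩
      · have := h1 p h; omega
      · omega
    · intro j hj
      by_cases hcase : j + k ≤ N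
      · obtain ⟨t, ht, hmem⟩ := h2 j hj
        refine ⟨t, ht, fun hx => ?_⟩
        rcases mem_addsmul.mp hx with h | ⟨-, he⟩
        · exact hmem h
        · -- j + t = N with j + t ≤ j + k - 1 ≤ N - 1, but need a bound on t... t < k
          omega
      · by_cases hji : j ≤ N - i
        · refine ⟨N - i - j, by omega, fun hx => ?_⟩
          rw [show j + (N - i - j) = N - i from by omega] at hx
          rcases mem_addsmul.mp hx with h | ⟨-, he⟩
          · rw [show N - i = N - 1 - (i-1) from by omega] at h
            exact h4 h
          · omega
        · refine ⟨N + 1 - j, by omega, fun hx => ?_⟩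
          rcases mem_addsmul.mp hx with h | ⟨-, he⟩
          · have := h1 _ h; omega
          · omega
    · intro j hj
      rcases Nat.eq_zero_or_pos j with rfl | hj1
      · exact mem_addsmul.mpr (Or.inr ⟨by omega, by omega⟩)
      · have hmem := h3 (j-1) (by omega)
        rw [show N - 1 - (j-1) = N - j from by omega] at hmem
        exact mem_addsmul.mpr (Or.inl hmem)
    · intro hx
      rcases mem_addsmul.mp hx with h | ⟨-, he⟩
      · rw [show N - i = N - 1 - (i-1) from by omega] at h
        exact h4 h
      · omega

lemma BsubA (k N : ℕ) (hN : 1 ≤ N) (j : ℕ) : vset k (N-1) j ⊆ vset k N 0 := by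
  rintro m ⟨h1, h2, -, -⟩
  have hNm : N ∉ m := fun hx => by have := h1 N hx; omega
  refine ⟨fun p hp => by have := h1 p hp; omega, h2, fun j hj => by omega, by simpa using hNm⟩

lemma key_indicator (k N : ℕ) (hk : 2 ≤ k) (hN : 1 ≤ N) (q : ℝ) (m : Multiset ℕ) :
    (vset k N 0).indicator (fun m : Multiset ℕ => q ^ Multiset.sum m) m =
      ∑ j ∈ Finset.range k,
        (vset k (N-1) j).indicator (fun m : Multiset ℕ => q ^ Multiset.sum m) m := by
  by_cases hA : m ∈ vset k N 0
  · obtain ⟨hparts, hcons, -, hN0⟩ := id hA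
    have hNm : N ∉ m := by simpa using hN0
    have h0m : (0 : ℕ) ∉ m := fun hx => by have := hparts 0 hx; omega
    have hex : ∃ t, (N - 1 - t) ∉ m := ⟨N - 1, by rwa [Nat.sub_self]⟩
    set j0 := Nat.find hex with hj0
    have hspec : N - 1 - j0 ∉ m := Nat.find_spec hex
    have hmin : ∀ t < j0, N - 1 - t ∈ m := fun t ht =>
      not_not.mp (Nat.find_min hex ht)
    have hle : j0 ≤ N - 1 := Nat.find_le (by rwa [Nat.sub_self])
    have hjk : j0 < k := by
      by_contra hky
      push_neg at hky
      obtain ⟨t, ht, hnm⟩ := hcons (N - k) (by omega)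
      apply hnm
      rw [show N - k + t = N - 1 - (k - 1 - t) from by omega]
      exact hmin _ (by omega)
    have hmB : m ∈ vset k (N-1) j0 := by
      refine ⟨fun p hp => ?_, hcons, fun j hj => hmin j hj, hspec⟩
      have := hparts p hp
      have hne : p ≠ N := fun he => hNm (he ▸ hp)
      omega
    rw [Set.indicator_of_mem hA]
    rw [Finset.sum_eq_single j0]
    · rw [Set.indicator_of_mem hmB]
    · intro b hb hbne
      refine Set.indicator_of_notMem (fun hB => ?_) _
      rcases lt_or_gt_of_ne hbne with hlt | hgt
      · exact hB.2.2.2 (hmin b hlt)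
      · exact hspec (hB.2.2.1 j0 hgt)
    · intro hj0k
      exact absurd (Finset.mem_range.mpr hjk) hj0k
  · rw [Set.indicator_of_notMem hA]
    refine (Finset.sum_eq_zero (fun j hj => Set.indicator_of_notMem
      (fun hB => hA (BsubA k N hN j hB)) _)).symm

lemma part1 (k N : ℕ) (hk : 2 ≤ k) (hN : 1 ≤ N) (q : ℝ) (hq0 : 0 < q) (hq1 : q < 1) :
    vtilde k N 0 q = ∑ j ∈ Finset.range k, vtilde k (N - 1) j q := by
  have hsummB : ∀ j ∈ Finset.range k,
      Summable ((vset k (N-1) j).indicator (fun m : Multiset ℕ => q ^ Multiset.sum m)) :=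
    fun j _ => summable_indicator_subset hq0 hq1 _ (fun m hm => hm.1)
  calc vtilde k N 0 q
      = ∑' m : Multiset ℕ,
          (vset k N 0).indicator (fun m : Multiset ℕ => q ^ Multiset.sum m) m :=
        vtilde_eq_tsum k N 0 q
    _ = ∑' m : Multiset ℕ, ∑ j ∈ Finset.range k,
          (vset k (N-1) j).indicator (fun m : Multiset ℕ => q ^ Multiset.sum m) m := by
        exact tsum_congr (fun m => key_indicator k N hk hN q m)
    _ = ∑ j ∈ Finset.range k, ∑' m : Multiset ℕ,
          (vset k (N-1) j).indicator (fun m : Multiset ℕ => q ^ Multiset.sum m) m :=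
        Summable.tsum_finsetSum hsummB
    _ = ∑ j ∈ Finset.range k, vtilde k (N-1) j q := by
        refine Finset.sum_congr rfl (fun j _ => (vtilde_eq_tsum k (N-1) j q).symm)

def posEquiv : ℕ ≃ {c : ℕ // 1 ≤ c} :=
  ⟨fun n => ⟨n+1, Nat.succ_le_succ (Nat.zero_le n)⟩, fun c => c.1 - 1,
    fun n => by simp, fun c => Subtype.ext (Nat.succ_pred_eq_of_pos c.2)⟩

lemma part2 (k N i : ℕ) (hk : 2 ≤ k) (hN : 1 ≤ N) (hi1 : 1 ≤ i) (hi2 : i ≤ k - 1)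
    (q : ℝ) (hq0 : 0 < q) (hq1 : q < 1) :
    vtilde k N i q = q ^ N / (1 - q ^ N) * vtilde k (N - 1) (i - 1) q := by
  have HQ : ∀ m : Multiset ℕ, m ∈ vset k (N-1) (i-1) → N ∉ m :=
    fun m hm hx => by have := hm.1 N hx; omega
  have H : ∀ (m : Multiset ℕ) (c : ℕ), N ∉ m →
      ((m + c • ({N} : Multiset ℕ)) ∈ vset k N i ↔ m ∈ vset k (N-1) (i-1) ∧ 1 ≤ c) :=
    fun m c hna => Hmain k N i hk hN hi1 hi2 m c hna
  have hqN : q ^ N < 1 := pow_lt_one₀ hq0.le hq1 (by omega)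
  have hfun : ((fun c : {c : ℕ // 1 ≤ c} => q ^ (N * c.1)) ∘ posEquiv)
      = fun n : ℕ => q ^ N * (q ^ N) ^ n := by
    funext n
    show q ^ (N * (n+1)) = q ^ N * (q ^ N) ^ n
    rw [pow_mul, pow_succ, mul_comm]
  have hgs : Summable (fun n : ℕ => q ^ N * (q ^ N) ^ n) :=
    (summable_geometric_of_lt_one (pow_nonneg hq0.le _) hqN).mul_left _
  have hR : Summable (fun c : {c : ℕ // 1 ≤ c} => q ^ (N * c.1)) :=
    posEquiv.summable_iff.mp (by rw [hfun]; exact hgs)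
  have hQs := summable_vset k (N-1) (i-1) hq0 hq1
  have main := (split_summable_tsum N (· ∈ vset k N i) (· ∈ vset k (N-1) (i-1))
    (fun c => 1 ≤ c) HQ H q hq0.le hR hQs).2
  have hcval : (∑' c : {c : ℕ // 1 ≤ c}, q ^ (N * c.1)) = q ^ N / (1 - q ^ N) := by
    rw [← posEquiv.tsum_eq (fun c : {c : ℕ // 1 ≤ c} => q ^ (N * c.1))]
    show (∑' n : ℕ, ((fun c : {c : ℕ // 1 ≤ c} => q ^ (N * c.1)) ∘ posEquiv) n) = _
    rw [hfun, tsum_mul_left, tsum_geometric_of_lt_one (pow_nonneg hq0.le _) hqN,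
      div_eq_mul_inv]
  rw [hcval] at main
  exact main

/-- The recursion `ṽ^k_0(N) = ∑_{j=0}^{k-1} ṽ^k_j(N-1)` and
`ṽ^k_i(N) = z(N) ṽ^k_{i-1}(N-1)` for `1 ≤ i ≤ k-1`, with `z(N) = q^N/(1-q^N)`. -/
theorem stmt_12 (k N : ℕ) (hk : 2 ≤ k) (hN : 1 ≤ N) (q : ℝ) (hq0 : 0 < q) (hq1 : q < 1) :
    vtilde k N 0 q = ∑ j ∈ Finset.range k, vtilde k (N - 1) j q ∧
    ∀ i : ℕ, 1 ≤ i → i ≤ k - 1 →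
      vtilde k N i q = q ^ N / (1 - q ^ N) * vtilde k (N - 1) (i - 1) q := by
  exact ⟨part1 k N hk hN q hq0 hq1,
    fun i hi1 hi2 => part2 k N i hk hN hi1 hi2 q hq0 hq1⟩
end

section
/- If λ_1, …, λ_k are the roots of λ^k − z^{-1}(λ^{k−1} + ⋯ + λ + 1) for real z > 0, then for all i ≠ j, |λ_i − λ_j| ≥ c_k |λ_j| for a positive constant c_k depending only on k. -/
open Polynomial

/-!
With `u = λ⁻¹` the roots are the solutions of `f u = z`, where `f u = u + u² + ⋯ + uᵏ`. For two
roots `λ ≠ μ` the ratio `t = λ / μ` satisfies `G(u, t) = 0`, where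
`f u - f (t u) = u (1 - t) G(u, t)`, so it suffices to bound `‖1 - t‖` from below on the zero set
of `G`. On `‖u‖ ≤ R` this is compactness: `t = 1` would make `u` a double root of `f - z`, and
eliminating `z` from `f u = z`, `f' u = 0` forces `u` to be a nonnegative real, where `f' > 0`.
For large `‖u‖`, `G(u, t) / u ^ (k - 1)` is a polynomial in `(u⁻¹, t)` whose value at `(0, 1)` is
`k`, so it does not vanish near that point.
-/

namespace RootSeparation

open Finset
open scoped ComplexOrder

variable {k : ℕ}

noncomputable def powerSum (k : ℕ) (u : ℂ) : ℂ := ∑ i ∈ range k, u ^ (i + 1)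

noncomputable def powerSumSlope (k : ℕ) (u t : ℂ) : ℂ :=
  ∑ i ∈ range k, u ^ i * ∑ m ∈ range (i + 1), t ^ m

noncomputable def powerSumSlopeRev (k : ℕ) (w t : ℂ) : ℂ :=
  ∑ i ∈ range k, w ^ i * ∑ m ∈ range (k - i), t ^ m

lemma powerSum_sub_powerSum_mul (u t : ℂ) :
    powerSum k u - powerSum k (t * u) = u * (1 - t) * powerSumSlope k u t := by
  rw [powerSum, powerSum, ← sum_sub_distrib, powerSumSlope, mul_sum]
  refine sum_congr rfl fun i _ => ?_
  have := geom_sum_mul t (i + 1)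
  linear_combination u ^ (i + 1) * this

lemma powerSumSlope_one (u : ℂ) : powerSumSlope k u 1 = ∑ i ∈ range k, ((i : ℂ) + 1) * u ^ i := by
  simp [powerSumSlope, mul_comm]

lemma sub_one_mul_powerSum (u : ℂ) : (u - 1) * powerSum k u = u ^ (k + 1) - u := by
  have h : powerSum k u = u * ∑ i ∈ range k, u ^ i := by simp [powerSum, mul_sum, pow_succ']
  rw [h]
  linear_combination u * geom_sum_mul u k

lemma powerSum_add_sub_one_mul_powerSumSlope_one (u : ℂ) :
    powerSum k u + (u - 1) * powerSumSlope k u 1 = (k + 1) * u ^ k - 1 := by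
  induction k with
  | zero => simp [powerSum, powerSumSlope]
  | succ k ih =>
    rw [powerSum, powerSumSlope_one] at *
    rw [sum_range_succ, sum_range_succ]
    push_cast
    linear_combination ih

lemma powerSumSlope_one_ofReal_ne_zero (hk : 0 < k) {x : ℝ} (hx : 0 ≤ x) :
    powerSumSlope k x 1 ≠ 0 := by
  have : powerSumSlope k x 1 = ((∑ i ∈ range k, ((i : ℝ) + 1) * x ^ i : ℝ) : ℂ) := by
    simp [powerSumSlope_one]
  rw [this, Complex.ofReal_ne_zero]
  exact (sum_pos' (fun i _ => by positivity) ⟨0, mem_range.2 hk, by simp⟩).ne'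

lemma powerSumSlope_one_ne_zero (hk : 0 < k) {u : ℂ} (hu : 0 ≤ powerSum k u) :
    powerSumSlope k u 1 ≠ 0 := by
  intro h0
  set z := (powerSum k u).re
  have hz : 0 ≤ z := (Complex.nonneg_iff.1 hu).1
  have hfz : powerSum k u = z := Complex.eq_re_of_ofReal_le (r := 0) (by simpa using hu)
  have h1 := sub_one_mul_powerSum (k := k) u
  have h2 := powerSum_add_sub_one_mul_powerSumSlope_one (k := k) u
  have hk' : (k : ℂ) * (z + 1) ≠ 0 := by
    norm_cast; positivity
  have hux : u = (((k + 1) * z / (k * (z + 1)) : ℝ) : ℂ) := by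
    push_cast
    rw [eq_div_iff hk']
    -- eliminate `u ^ k` between the two identities
    linear_combination (k + 1 : ℂ) * h1 - u * h2 + (u * (u - 1)) * h0 + (k + 1 - u * k) * hfz
  exact powerSumSlope_one_ofReal_ne_zero hk (by positivity) (hux ▸ h0)

lemma powerSumSlope_eq_pow_mul_powerSumSlopeRev {u : ℂ} (hu : u ≠ 0) (t : ℂ) :
    powerSumSlope k u t = u ^ (k - 1) * powerSumSlopeRev k u⁻¹ t := by
  rw [powerSumSlopeRev, mul_sum, ← sum_range_reflect, powerSumSlope]
  refine sum_congr rfl fun i hi => ?_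
  have hik := mem_range.1 hi
  have hpow : u ^ (k - 1) = u ^ i * u ^ (k - 1 - i) := by rw [← pow_add]; congr 1; omega
  rw [show k - (k - 1 - i) = i + 1 by omega, hpow, inv_pow]
  field_simp

lemma powerSumSlopeRev_zero_one : powerSumSlopeRev k 0 1 = k := by
  cases k <;> simp [powerSumSlopeRev, sum_range_succ']

lemma continuous_powerSumSlopeRev : Continuous fun p : ℂ × ℂ => powerSumSlopeRev k p.1 p.2 := by
  unfold powerSumSlopeRev; fun_prop

lemma continuous_powerSumSlope : Continuous fun p : ℂ × ℂ => powerSumSlope k p.1 p.2 := by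
  unfold powerSumSlope; fun_prop

lemma continuous_powerSum : Continuous (powerSum k) := by
  unfold powerSum; fun_prop

lemma exists_powerSumSlopeRev_ne_zero (hk : 0 < k) :
    ∃ δ > 0, ∀ w t : ℂ, ‖w‖ < δ → ‖1 - t‖ < δ → powerSumSlopeRev k w t ≠ 0 := by
  have h01 : powerSumSlopeRev k 0 1 ≠ 0 := by
    rw [powerSumSlopeRev_zero_one]; exact_mod_cast hk.ne'
  obtain ⟨δ, hδ, hball⟩ := Metric.mem_nhds_iff.1 <|
    continuous_powerSumSlopeRev.continuousAt (x := ((0 : ℂ), (1 : ℂ))) (isOpen_ne.mem_nhds h01)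
  refine ⟨δ, hδ, fun w t hw ht => @hball (w, t) ?_⟩
  rw [Metric.mem_ball, Prod.dist_eq, dist_zero_right, dist_eq_norm, norm_sub_rev]
  exact max_lt hw ht

lemma exists_le_norm_one_sub_of_norm_le (hk : 0 < k) (R : ℝ) :
    ∃ c > 0, ∀ u t : ℂ, ‖u‖ ≤ R → 0 ≤ powerSum k u → powerSumSlope k u t = 0 →
      c ≤ ‖1 - t‖ := by
  set K : Set (ℂ × ℂ) :=
    {p | ‖p.1‖ ≤ R ∧ 0 ≤ powerSum k p.1 ∧ ‖1 - p.2‖ ≤ 1 ∧ powerSumSlope k p.1 p.2 = 0}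
  have hK : IsCompact K := by
    refine ((isCompact_closedBall (0 : ℂ) R).prod
      (isCompact_closedBall (1 : ℂ) 1)).of_isClosed_subset ?_ fun p hp =>
        ⟨by simpa using hp.1, by simpa [dist_eq_norm, norm_sub_rev] using hp.2.2.1⟩
    exact (isClosed_le continuous_fst.norm continuous_const).inter <|
      (isClosed_le continuous_const (continuous_powerSum.comp continuous_fst)).inter <|
      (isClosed_le (continuous_const.sub continuous_snd).norm continuous_const).inter <|
      isClosed_eq continuous_powerSumSlope continuous_const
  have hpos : ∀ p ∈ K, 0 < ‖1 - p.2‖ := by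
    rintro ⟨u, t⟩ ⟨-, hu, -, ht⟩
    refine norm_pos_iff.2 (sub_ne_zero.2 fun h => powerSumSlope_one_ne_zero hk hu ?_)
    rwa [h]
  obtain ⟨c, hc, hcK⟩ := hK.exists_forall_le' (by fun_prop) hpos
  refine ⟨min c 1, lt_min hc one_pos, fun u t hu hf hq => ?_⟩
  by_cases ht : ‖1 - t‖ ≤ 1
  · exact (min_le_left _ _).trans (hcK (u, t) ⟨hu, hf, ht, hq⟩)
  · exact (min_le_right _ _).trans (not_le.1 ht).le

lemma exists_le_norm_one_sub (hk : 0 < k) :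
    ∃ c > 0, ∀ u t : ℂ, u ≠ 0 → 0 ≤ powerSum k u → powerSumSlope k u t = 0 →
      c ≤ ‖1 - t‖ := by
  obtain ⟨δ, hδ, hfar⟩ := exists_powerSumSlopeRev_ne_zero hk
  obtain ⟨c, hc, hnear⟩ := exists_le_norm_one_sub_of_norm_le hk δ⁻¹
  refine ⟨min c δ, lt_min hc hδ, fun u t hu hf hq => ?_⟩
  by_cases hR : ‖u‖ ≤ δ⁻¹
  · exact (min_le_left _ _).trans (hnear u t hR hf hq)
  · refine (min_le_right _ _).trans (not_lt.1 fun ht => hfar u⁻¹ t ?_ ht ?_)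
    · rw [norm_inv]; exact inv_lt_of_inv_lt₀ hδ (not_le.1 hR)
    · simpa [powerSumSlope_eq_pow_mul_powerSumSlopeRev hu, hu] using hq

lemma pow_mul_powerSum_inv {u : ℂ} (hu : u ≠ 0) :
    u ^ k * powerSum k u⁻¹ = ∑ i ∈ range k, u ^ i := by
  induction k with
  | zero => simp [powerSum]
  | succ k ih =>
    have hshift : ∑ i ∈ range k, u ^ (i + 1) = u * ∑ i ∈ range k, u ^ i := by
      simp [mul_sum, pow_succ']
    rw [powerSum, sum_range_succ, ← powerSum, sum_range_succ', hshift, ← ih, inv_pow, mul_add,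
      mul_inv_cancel₀ (pow_ne_zero _ hu)]
    ring

lemma powerSum_inv_of_isRoot (hk : 0 < k) {z : ℝ} (hz : z ≠ 0) {lam : ℂ}
    (h : (X ^ k - C ((z : ℂ))⁻¹ * ∑ i ∈ Finset.range k, X ^ i : Polynomial ℂ).IsRoot lam) :
    lam ≠ 0 ∧ powerSum k lam⁻¹ = z := by
  have hz' : (z : ℂ) ≠ 0 := Complex.ofReal_ne_zero.2 hz
  simp only [IsRoot, eval_sub, eval_pow, eval_X, eval_mul, eval_C, eval_finsetSum] at h
  have hlam : lam ≠ 0 := by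
    rintro rfl
    obtain ⟨k, rfl⟩ := Nat.exists_eq_add_of_lt hk
    simp [sum_range_succ', hz'] at h
  refine ⟨hlam, mul_left_cancel₀ (pow_ne_zero k hlam) ?_⟩
  rw [sub_eq_zero, eq_inv_mul_iff_mul_eq₀ hz'] at h
  rw [pow_mul_powerSum_inv hlam, ← h, mul_comm]

end RootSeparation

open RootSeparation

/-- Uniform-in-`z` separation of roots: there is `c_k > 0` such that for all `z > 0`
and any two distinct roots `λ, μ` of `λ^k - z⁻¹ (λ^{k-1} + ⋯ + λ + 1)`,
`|λ - μ| ≥ c_k |μ|`. -/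
theorem stmt_14 (k : ℕ) (hk : 2 ≤ k) :
    ∃ c : ℝ, 0 < c ∧ ∀ z : ℝ, 0 < z → ∀ lam mu : ℂ,
      (X ^ k - C ((z : ℂ))⁻¹ * ∑ i ∈ Finset.range k, X ^ i : Polynomial ℂ).IsRoot lam →
      (X ^ k - C ((z : ℂ))⁻¹ * ∑ i ∈ Finset.range k, X ^ i : Polynomial ℂ).IsRoot mu →
      lam ≠ mu → c * ‖mu‖ ≤ ‖lam - mu‖ := by
  have hk0 : 0 < k := by omega
  obtain ⟨c, hc, hsep⟩ := exists_le_norm_one_sub hk0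
  refine ⟨c, hc, fun z hz lam mu hlam hmu hne => ?_⟩
  obtain ⟨hlam0, hflam⟩ := powerSum_inv_of_isRoot hk0 hz.ne' hlam
  obtain ⟨hmu0, hfmu⟩ := powerSum_inv_of_isRoot hk0 hz.ne' hmu
  have ht : lam / mu ≠ 1 := div_ne_one_of_ne hne
  have hq : powerSumSlope k lam⁻¹ (lam / mu) = 0 := by
    have := powerSum_sub_powerSum_mul (k := k) lam⁻¹ (lam / mu)
    rw [show lam / mu * lam⁻¹ = mu⁻¹ by field_simp, hflam, hfmu, sub_self] at this
    simpa [hlam0, sub_eq_zero, Ne.symm ht] using this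
  calc c * ‖mu‖ ≤ ‖1 - lam / mu‖ * ‖mu‖ := by
        gcongr
        exact hsep lam⁻¹ (lam / mu) (inv_ne_zero hlam0) (hflam ▸ by exact_mod_cast hz.le) hq
    _ = ‖lam - mu‖ := by rw [← norm_mul, norm_sub_rev]; congr 1; field_simp
end

section
/- As z → 0+, the polynomial λ^k − z^{-1}(λ^{k−1} + ⋯ + λ + 1) has one root satisfying λ = z^{-1}(1 + O_k(z)), and the other k−1 roots satisfy λ = ω(1 + O_k(z)) for the distinct kth roots of unity ω ≠ 1. -/
/-!
For `λ ≠ 1`, clearing the denominator `λ - 1` turns the root condition into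
`λ^k - 1 = z λ^k (λ - 1)`. At `z = 0` every `k`-th root of unity `ω ≠ 1` is a simple solution,
and after the substitution `λ = μ / z` so is `μ = 1` of `μ^k (μ - 1 - z) + z^k = 0`. A simple
root moves by `O_k(z)` under the perturbation: the Newton-type map `x ↦ x - f x / f' c` contracts
a ball of radius `4 z` around it into itself. Distinct `k`-th roots of unity are `1/k` apart, so
the perturbed roots stay distinct.
-/

open Polynomial Finset Metric Set

theorem norm_pow_sub_pow_le {R : Type*} [NormedCommRing R] [NormOneClass R] {x y : R} {M : ℝ}
    (hx : ‖x‖ ≤ M) (hy : ‖y‖ ≤ M) (n : ℕ) : ‖x ^ n - y ^ n‖ ≤ n * M ^ (n - 1) * ‖x - y‖ := by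
  have hM : 0 ≤ M := (norm_nonneg x).trans hx
  have hterm : ∀ i ∈ range n, ‖x ^ i * y ^ (n - 1 - i)‖ ≤ M ^ (n - 1) := fun i hi => calc
    ‖x ^ i * y ^ (n - 1 - i)‖ ≤ ‖x‖ ^ i * ‖y‖ ^ (n - 1 - i) :=
      (norm_mul_le _ _).trans (mul_le_mul (norm_pow_le _ _) (norm_pow_le _ _) (norm_nonneg _)
        (by positivity))
    _ ≤ M ^ i * M ^ (n - 1 - i) := by gcongr
    _ = M ^ (n - 1) := by rw [← pow_add]; congr 1; have := mem_range.mp hi; omega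
  rw [← geom_sum₂_mul]
  calc ‖(∑ i ∈ range n, x ^ i * y ^ (n - 1 - i)) * (x - y)‖
      ≤ ‖∑ i ∈ range n, x ^ i * y ^ (n - 1 - i)‖ * ‖x - y‖ := norm_mul_le _ _
    _ ≤ n * M ^ (n - 1) * ‖x - y‖ := by
      gcongr
      simpa using (norm_sum_le _ _).trans (sum_le_sum hterm)

theorem norm_pow_le_two_pow {R : Type*} [NormedCommRing R] [NormOneClass R] {x : R}
    (hx : ‖x‖ ≤ 2) {n k : ℕ} (hnk : n ≤ k) : ‖x ^ n‖ ≤ 2 ^ k :=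
  (norm_pow_le _ _).trans <| (pow_le_pow_left₀ (norm_nonneg x) hx n).trans <|
    pow_le_pow_right₀ one_le_two hnk

theorem norm_pow_sub_one_le {R : Type*} [NormedCommRing R] [NormOneClass R] {x : R}
    (hx : ‖x‖ ≤ 2) {n k : ℕ} (hnk : n ≤ k) : ‖x ^ n - 1‖ ≤ k * 2 ^ k * ‖x - 1‖ := by
  calc ‖x ^ n - 1‖ = ‖x ^ n - 1 ^ n‖ := by rw [one_pow]
    _ ≤ n * 2 ^ (n - 1) * ‖x - 1‖ := norm_pow_sub_pow_le hx (by simp) n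
    _ ≤ k * 2 ^ k * ‖x - 1‖ := by
      gcongr
      · exact one_le_two
      · omega

theorem norm_eq_one_of_pow_eq_one {R : Type*} [NormedRing R] [NormMulClass R] [NormOneClass R]
    {a : R} {k : ℕ} (hk : k ≠ 0) (ha : a ^ k = 1) : ‖a‖ = 1 :=
  (isOfFinOrder_iff_pow_eq_one.2 ⟨k, Nat.pos_of_ne_zero hk, ha⟩).norm_eq_one

section RCLike

variable {𝕜 : Type*} [RCLike 𝕜]

theorem inv_natCast_le_norm_sub_one_of_pow_eq_one {k : ℕ} {ζ : 𝕜} (hζk : ζ ^ k = 1)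
    (hζ : ζ ≠ 1) : (k : ℝ)⁻¹ ≤ ‖ζ - 1‖ := by
  rcases k.eq_zero_or_pos with rfl | hk
  · simp
  have hnorm : ‖ζ‖ = 1 := norm_eq_one_of_pow_eq_one hk.ne' hζk
  have hgeom : ∑ i ∈ range k, ζ ^ i = 0 := by rw [geom_sum_eq hζ, hζk, sub_self, zero_div]
  have hterm : ∀ i ∈ range k, ‖1 - ζ ^ i‖ ≤ k * ‖ζ - 1‖ := fun i hi => calc
    ‖1 - ζ ^ i‖ = ‖ζ ^ i - 1 ^ i‖ := by rw [one_pow, norm_sub_rev]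
    _ ≤ i * 1 ^ (i - 1) * ‖ζ - 1‖ := norm_pow_sub_pow_le hnorm.le norm_one.le i
    _ ≤ k * ‖ζ - 1‖ := by
      rw [one_pow, mul_one]; gcongr; exact_mod_cast (mem_range.mp hi).le
  have hsum : (k : ℝ) ≤ k * (k * ‖ζ - 1‖) := calc
    (k : ℝ) = ‖∑ i ∈ range k, (1 - ζ ^ i)‖ := by
      rw [sum_sub_distrib, hgeom, sum_const, card_range]; simp
    _ ≤ ∑ i ∈ range k, ‖1 - ζ ^ i‖ := norm_sum_le _ _
    _ ≤ k * (k * ‖ζ - 1‖) := by simpa using sum_le_sum hterm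
  have hk' : (0 : ℝ) < k := by exact_mod_cast hk
  rw [inv_le_iff_one_le_mul₀ hk']
  nlinarith

theorem eq_of_mul_eq_mul_of_pow_eq_one {k : ℕ} (hk : k ≠ 0) {a b u v : 𝕜} {ε : ℝ}
    (ha : a ^ k = 1) (hb : b ^ k = 1) (h : a * u = b * v) (hu : ‖u - 1‖ ≤ ε)
    (hv : ‖v - 1‖ ≤ ε) (hε : 2 * k * ε < 1) : a = b := by
  by_contra hab
  have hb0 : b ≠ 0 := by rintro rfl; simp [hk] at hb
  have hanorm : ‖a‖ = 1 := norm_eq_one_of_pow_eq_one hk ha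
  have hbnorm : ‖b‖ = 1 := norm_eq_one_of_pow_eq_one hk hb
  have hsep := inv_natCast_le_norm_sub_one_of_pow_eq_one (ζ := a / b)
    (by rw [div_pow, ha, hb, div_one]) (by rwa [ne_eq, div_eq_one_iff_eq hb0])
  have hclose : ‖a / b - 1‖ ≤ 2 * ε := calc
    ‖a / b - 1‖ = ‖b * (v - 1) - a * (u - 1)‖ := by
      rw [div_sub_one hb0, norm_div, hbnorm, div_one]; congr 1; linear_combination h
    _ ≤ ‖b‖ * ‖v - 1‖ + ‖a‖ * ‖u - 1‖ := (norm_sub_le _ _).trans (by rw [norm_mul, norm_mul])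
    _ ≤ 2 * ε := by rw [hanorm, hbnorm]; linarith
  have hk' : (0 : ℝ) < k := by exact_mod_cast Nat.pos_of_ne_zero hk
  rw [inv_le_iff_one_le_mul₀ hk'] at hsep
  nlinarith

theorem exists_mem_closedBall_eq_zero_of_norm_deriv_sub_le {f f' : 𝕜 → 𝕜} {c L : 𝕜} {r : ℝ}
    (hL : L ≠ 0) (hf : ∀ x ∈ closedBall c r, HasDerivAt f (f' x) x)
    (hf' : ∀ x ∈ closedBall c r, ‖f' x - L‖ ≤ ‖L‖ / 2) (hc : ‖f c‖ ≤ ‖L‖ * r / 2) :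
    ∃ x ∈ closedBall c r, f x = 0 := by
  have hL' : 0 < ‖L‖ := norm_pos_iff.mpr hL
  have hr : 0 ≤ r := by nlinarith [norm_nonneg (f c)]
  set Φ : 𝕜 → 𝕜 := fun x => x - f x / L
  have hΦ : ∀ x ∈ closedBall c r, HasDerivWithinAt Φ (1 - f' x / L) (closedBall c r) x :=
    fun x hx => ((hasDerivAt_id' x).sub ((hf x hx).div_const L)).hasDerivWithinAt
  have hΦ' : ∀ x ∈ closedBall c r, ‖1 - f' x / L‖ ≤ 1 / 2 := fun x hx => by
    rw [one_sub_div hL, norm_div, norm_sub_rev, div_le_iff₀ hL']; linarith [hf' x hx]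
  have hlip : ∀ x ∈ closedBall c r, ∀ y ∈ closedBall c r, ‖Φ x - Φ y‖ ≤ 1 / 2 * ‖x - y‖ :=
    fun x hx y hy =>
      (convex_closedBall c r).norm_image_sub_le_of_norm_hasDerivWithin_le hΦ hΦ' hy hx
  have hΦc : ‖Φ c - c‖ ≤ r / 2 := by
    rw [sub_sub_cancel_left, norm_neg, norm_div, div_le_iff₀ hL']; linarith
  have hmaps : MapsTo Φ (closedBall c r) (closedBall c r) := fun x hx => by
    rw [mem_closedBall, dist_eq_norm] at hx ⊢
    calc ‖Φ x - c‖ ≤ ‖Φ x - Φ c‖ + ‖Φ c - c‖ := norm_sub_le_norm_sub_add_norm_sub _ _ _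
      _ ≤ 1 / 2 * ‖x - c‖ + r / 2 := add_le_add (hlip x (by simpa [dist_eq_norm] using hx) c
          (mem_closedBall_self hr)) hΦc
      _ ≤ r := by linarith
  have hcontr : ContractingWith (1 / 2) (hmaps.restrict Φ _ _) := by
    refine ⟨by norm_num, LipschitzOnWith.mapsToRestrict hmaps ?_⟩
    refine LipschitzOnWith.of_dist_le_mul fun x hx y hy => ?_
    simpa [dist_eq_norm] using hlip x hx y hy
  obtain ⟨x, hx, hfix, -⟩ := hcontr.exists_fixedPoint' isClosed_closedBall.isComplete hmaps
    (mem_closedBall_self hr) (edist_ne_top _ _)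
  refine ⟨x, hx, ?_⟩
  have : f x / L = 0 := sub_eq_self.mp hfix
  exact (div_eq_zero_iff.mp this).resolve_right hL

end RCLike

theorem isRoot_of_pow_sub_one_eq_mul {K : Type*} [Field K] {k : ℕ} {z x : K} (hz : z ≠ 0)
    (hx : x ≠ 1) (h : x ^ k - 1 = z * x ^ k * (x - 1)) :
    (X ^ k - C z⁻¹ * ∑ i ∈ range k, X ^ i : K[X]).IsRoot x := by
  have hgeom : ∑ i ∈ range k, x ^ i = z * x ^ k := by
    rw [geom_sum_eq hx, h, mul_div_cancel_right₀ _ (sub_ne_zero.mpr hx)]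
  simp [IsRoot, eval_finsetSum, hgeom, hz]

/-- The large root, rescaled by `μ = z λ`. -/
theorem exists_large_root_rescaled {k : ℕ} (hk : 0 < k) {z : ℝ} (hz : 0 ≤ z)
    (hzk : 18 * k * 2 ^ k * z ≤ 1) :
    ∃ μ ∈ closedBall (1 : ℂ) (4 * z), μ ^ k * (μ - 1 - z) + z ^ k = 0 := by
  have hB : (1 : ℝ) ≤ k * 2 ^ k :=
    one_le_mul_of_one_le_of_one_le (by exact_mod_cast hk) (one_le_pow₀ one_le_two)
  have hz4 : 4 * z ≤ 1 := by nlinarith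
  refine exists_mem_closedBall_eq_zero_of_norm_deriv_sub_le
    (f := fun μ : ℂ => μ ^ k * (μ - 1 - z) + z ^ k) (c := 1) (r := 4 * z)
    (f' := fun μ => k * μ ^ (k - 1) * (μ - 1 - z) + μ ^ k * 1) (L := 1) one_ne_zero
    (fun μ _ => ((hasDerivAt_pow k μ).mul
      (((hasDerivAt_id' μ).sub_const 1).sub_const _)).add_const _) (fun μ hμ => ?_) ?_
  · rw [mem_closedBall, dist_eq_norm] at hμ
    have hμ2 : ‖μ‖ ≤ 2 := by
      linarith [norm_le_norm_sub_add μ 1, norm_one (α := ℂ)]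
    have hshift : ‖μ - 1 - z‖ ≤ 5 * z := by
      refine (norm_sub_le _ _).trans ?_
      rw [Complex.norm_of_nonneg hz]; linarith
    calc ‖k * μ ^ (k - 1) * (μ - 1 - z) + μ ^ k * 1 - 1‖
        = ‖k * μ ^ (k - 1) * (μ - 1 - z) + (μ ^ k - 1)‖ := by ring_nf
      _ ≤ k * 2 ^ k * (5 * z) + k * 2 ^ k * (4 * z) := by
        refine (norm_add_le _ _).trans (add_le_add ?_ ?_)
        · rw [norm_mul, norm_mul, Complex.norm_natCast]
          gcongr
          exact norm_pow_le_two_pow hμ2 (Nat.sub_le k 1)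
        · exact (norm_pow_sub_one_le hμ2 le_rfl).trans (by gcongr)
      _ ≤ ‖(1 : ℂ)‖ / 2 := by rw [norm_one]; linarith
  · have hzk' : z ^ k ≤ z := pow_le_of_le_one hz (by linarith) hk.ne'
    calc ‖(1 : ℂ) ^ k * (1 - 1 - z) + z ^ k‖ = z - z ^ k := by
          rw [one_pow, one_mul, sub_self, zero_sub, ← Complex.ofReal_pow, ← Complex.ofReal_neg,
            ← Complex.ofReal_add, Complex.norm_real, Real.norm_eq_abs, abs_of_nonpos (by linarith)]
          ring
      _ ≤ ‖(1 : ℂ)‖ * (4 * z) / 2 := by rw [norm_one]; nlinarith [pow_nonneg hz k]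

/-- The root near `ω`, rescaled by `λ = ω ν`. -/
theorem exists_small_root_rescaled {k : ℕ} (hk : 0 < k) {z : ℝ} (hz : 0 ≤ z)
    (hzk : 18 * k * 2 ^ k * z ≤ 1) {ω : ℂ} (hω : ω ^ k = 1) :
    ∃ ν ∈ closedBall (1 : ℂ) (4 * z), ν ^ k - 1 = z * ν ^ k * (ω * ν - 1) := by
  have hωn : ‖ω‖ = 1 := norm_eq_one_of_pow_eq_one hk.ne' hω
  have hk1 : (1 : ℝ) ≤ k := by exact_mod_cast hk
  have hB : (1 : ℝ) ≤ k * 2 ^ k := one_le_mul_of_one_le_of_one_le hk1 (one_le_pow₀ one_le_two)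
  have hz4 : 4 * z ≤ 1 := by nlinarith
  suffices ∃ ν ∈ closedBall (1 : ℂ) (4 * z), ν ^ k - 1 - z * (ν ^ k * (ω * ν - 1)) = 0 by
    obtain ⟨ν, hν, hroot⟩ := this
    exact ⟨ν, hν, by linear_combination hroot⟩
  refine exists_mem_closedBall_eq_zero_of_norm_deriv_sub_le
    (f := fun ν => ν ^ k - 1 - z * (ν ^ k * (ω * ν - 1)))
    (f' := fun ν => k * ν ^ (k - 1) - z * (k * ν ^ (k - 1) * (ω * ν - 1) + ν ^ k * (ω * 1)))
    (c := 1) (L := k) (r := 4 * z) (by exact_mod_cast hk.ne')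
    (fun ν _ => ((hasDerivAt_pow k ν).sub_const 1).sub
      (((hasDerivAt_pow k ν).mul (((hasDerivAt_id' ν).const_mul ω).sub_const 1)).const_mul _))
    (fun ν hν => ?_) ?_
  · rw [mem_closedBall, dist_eq_norm] at hν
    have hν2 : ‖ν‖ ≤ 2 := by
      linarith [norm_le_norm_sub_add ν 1, norm_one (α := ℂ)]
    have hων : ‖ω * ν - 1‖ ≤ 3 := by
      refine (norm_sub_le _ _).trans ?_
      rw [norm_mul, hωn, norm_one]; linarith
    calc ‖k * ν ^ (k - 1) - z * (k * ν ^ (k - 1) * (ω * ν - 1) + ν ^ k * (ω * 1)) - k‖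
        = ‖k * (ν ^ (k - 1) - 1) - z * (k * ν ^ (k - 1) * (ω * ν - 1) + ν ^ k * ω)‖ := by
          ring_nf
      _ ≤ k * (k * 2 ^ k * (4 * z)) + z * (k * 2 ^ k * 3 + 2 ^ k) := by
        refine (norm_sub_le _ _).trans (add_le_add ?_ ?_)
        · rw [norm_mul, Complex.norm_natCast]
          gcongr
          exact (norm_pow_sub_one_le hν2 (Nat.sub_le k 1)).trans (by gcongr)
        · rw [norm_mul, Complex.norm_of_nonneg hz]
          gcongr
          refine (norm_add_le _ _).trans (add_le_add ?_ ?_)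
          · rw [norm_mul, norm_mul, Complex.norm_natCast]
            gcongr
            exact norm_pow_le_two_pow hν2 (Nat.sub_le k 1)
          · rw [norm_mul, hωn, mul_one]
            exact norm_pow_le_two_pow hν2 le_rfl
      _ ≤ ‖(k : ℂ)‖ / 2 := by
        rw [Complex.norm_natCast]
        nlinarith [mul_nonneg (mul_nonneg hz (by positivity : (0 : ℝ) ≤ 2 ^ k)) (sub_nonneg.2 hk1)]
  · calc ‖(1 : ℂ) ^ k - 1 - z * (1 ^ k * (ω * 1 - 1))‖ = z * ‖ω - 1‖ := by
          rw [one_pow, one_mul, mul_one, sub_self, zero_sub, norm_neg, norm_mul,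
            Complex.norm_of_nonneg hz]
      _ ≤ z * 2 := by
        gcongr
        refine (norm_sub_le _ _).trans ?_
        rw [hωn, norm_one]; norm_num
      _ ≤ ‖(k : ℂ)‖ * (4 * z) / 2 := by rw [Complex.norm_natCast]; nlinarith

theorem exists_large_root {k : ℕ} (hk : 0 < k) {z : ℝ} (hz : 0 < z)
    (hzk : 18 * k * 2 ^ k * z ≤ 1) :
    ∃ lam : ℂ, (X ^ k - C ((z : ℂ))⁻¹ * ∑ i ∈ range k, X ^ i : ℂ[X]).IsRoot lam ∧
      ∃ E : ℂ, ‖E‖ ≤ 4 * z ∧ lam = ((z : ℂ))⁻¹ * (1 + E) := by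
  have hz0 : (z : ℂ) ≠ 0 := by exact_mod_cast hz.ne'
  have hz5 : 5 * z < 1 := by
    have h2k : (2 : ℝ) ≤ 2 ^ k := by simpa using pow_le_pow_right₀ one_le_two hk
    have hk1 : (1 : ℝ) ≤ k := by exact_mod_cast hk
    nlinarith [mul_nonneg (mul_nonneg (sub_nonneg.2 hk1) (by positivity : (0 : ℝ) ≤ 2 ^ k)) hz.le,
      mul_nonneg (sub_nonneg.2 h2k) hz.le]
  obtain ⟨μ, hμ, hroot⟩ := exists_large_root_rescaled hk hz.le hzk
  rw [mem_closedBall_iff_norm] at hμ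
  refine ⟨(z : ℂ)⁻¹ * μ, isRoot_of_pow_sub_one_eq_mul hz0 (fun h => ?_) ?_, μ - 1, hμ, by ring⟩
  · rw [inv_mul_eq_one₀ hz0] at h
    rw [← h, ← Complex.ofReal_one, ← Complex.ofReal_sub, Complex.norm_real, Real.norm_eq_abs,
      abs_sub_comm] at hμ
    linarith [le_abs_self (1 - z)]
  · rw [mul_pow, inv_pow]
    field_simp
    linear_combination -hroot

/-- For small `z > 0`, `λ^k - z⁻¹ (λ^{k-1} + ⋯ + λ + 1)` has one root
`λ = z⁻¹ (1 + O_k(z))` and, for each `k`-th root of unity `ω ≠ 1`, a root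
`λ = ω (1 + O_k(z))`, all distinct. -/
theorem stmt_16 (k : ℕ) (hk : 2 ≤ k) :
    ∃ Ck : ℝ, 0 < Ck ∧ ∃ δ : ℝ, 0 < δ ∧ ∀ z : ℝ, 0 < z → z < δ →
      (∃ lam : ℂ,
        (X ^ k - C ((z : ℂ))⁻¹ * ∑ i ∈ Finset.range k, X ^ i : Polynomial ℂ).IsRoot lam ∧
        ∃ E : ℂ, ‖E‖ ≤ Ck * z ∧ lam = ((z : ℂ))⁻¹ * (1 + E)) ∧
      ∃ lam : ℂ → ℂ, Set.InjOn lam {ω : ℂ | ω ^ k = 1 ∧ ω ≠ 1} ∧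
        ∀ ω : ℂ, ω ^ k = 1 → ω ≠ 1 →
          (X ^ k - C ((z : ℂ))⁻¹ * ∑ i ∈ Finset.range k, X ^ i : Polynomial ℂ).IsRoot (lam ω) ∧
          ∃ E : ℂ, ‖E‖ ≤ Ck * z ∧ lam ω = ω * (1 + E) := by
  refine ⟨4, by norm_num, 1 / (18 * k * 2 ^ k), by positivity, fun z hz hzδ => ?_⟩
  have hk0 : 0 < k := by omega
  have hzk : 18 * k * 2 ^ k * z ≤ 1 := by
    rw [lt_div_iff₀ (by positivity)] at hzδ; linarith
  refine ⟨exists_large_root hk0 hz hzk, ?_⟩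
  choose! ν hν hroot using fun ω (hω : ω ^ k = 1) =>
    exists_small_root_rescaled hk0 hz.le hzk hω
  simp only [mem_closedBall_iff_norm] at hν
  have hsep : 2 * k * (4 * z) < 1 := by
    have h2k : (1 : ℝ) ≤ 2 ^ k := one_le_pow₀ one_le_two
    have hkz : 0 < (k : ℝ) * z := mul_pos (by exact_mod_cast hk0) hz
    nlinarith [mul_nonneg hkz.le (sub_nonneg.2 h2k)]
  refine ⟨fun ω => ω * ν ω, fun a ha b hb hab => ?_,
    fun ω hω hω1 => ⟨?_, ν ω - 1, hν ω hω, by ring⟩⟩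
  · exact eq_of_mul_eq_mul_of_pow_eq_one hk0.ne' ha.1 hb.1 hab (hν a ha.1) (hν b hb.1) hsep
  refine isRoot_of_pow_sub_one_eq_mul (by exact_mod_cast hz.ne') (fun h => hω1 ?_) ?_
  · exact eq_of_mul_eq_mul_of_pow_eq_one hk0.ne' hω (one_pow k) (h.trans (mul_one 1).symm)
      (hν ω hω) (by rw [sub_self, norm_zero]; positivity) hsep
  · rw [mul_pow, hω, one_mul]
    exact hroot ω hω
end

section
/- The sequence p_k(n) of numbers of partitions of n with no k consecutive part sizes is nondecreasing in n, i.e., (1−q)G_k(q) = ∑_{n≥0}(p_k(n) − p_k(n−1))q^n has nonnegative coefficients. -/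
namespace Stmt18

open Multiset

lemma sup_mem {s : Multiset ℕ} (h : s ≠ 0) : s.sup ∈ s := by
  induction s using Multiset.induction with
  | empty => exact absurd rfl h
  | cons a t ih =>
    rw [Multiset.sup_cons]
    rcases eq_or_ne t 0 with rfl | ht
    · simp
    · rcases le_total t.sup a with hle | hle
      · rw [sup_eq_left.mpr hle]; exact Multiset.mem_cons_self a t
      · rw [sup_eq_right.mpr hle]; exact Multiset.mem_cons_of_mem (ih ht)

/-- `good2 S`: no two consecutive sizes both occur. -/
def good2 (S : Multiset ℕ) : Prop := ∀ j : ℕ, 1 ≤ j → j ∉ S ∨ j + 1 ∉ S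

def rho (P : Multiset ℕ) : Multiset ℕ := P.filter (· ≠ 2)

def step2 (P : Multiset ℕ) : Multiset ℕ :=
  if 2 ∈ P then
    if (rho P) ≠ 0 ∧ (rho P).count (rho P).sup = 1 then
      ((rho P).sup + 1) ::ₘ P.erase (rho P).sup
    else ((rho P).sup + 2 * P.count 2 + 1) ::ₘ (rho P).erase (rho P).sup
  else 1 ::ₘ P

lemma mem_rho {P : Multiset ℕ} {x : ℕ} : x ∈ rho P ↔ x ∈ P ∧ x ≠ 2 := by
  simp [rho]

lemma P_eq_split (P : Multiset ℕ) :
    P = Multiset.replicate (P.count 2) 2 + rho P := by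
  rw [Multiset.ext]
  intro a
  rw [Multiset.count_add, Multiset.count_replicate, rho, Multiset.count_filter]
  by_cases ha : a = 2
  · simp [ha]
  · simp [ha, Ne.symm ha]

lemma sum_P (P : Multiset ℕ) : P.sum = 2 * P.count 2 + (rho P).sum := by
  conv_lhs => rw [P_eq_split P]
  rw [Multiset.sum_add, Multiset.sum_replicate, smul_eq_mul]
  ring_nf



section
variable {P : Multiset ℕ}

lemma no1 (hg : good2 P) (h2 : 2 ∈ P) : 1 ∉ P := by
  rcases hg 1 le_rfl with h | h
  · exact h
  · exact absurd h2 (by simpa using h)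

lemma no3 (hg : good2 P) (h2 : 2 ∈ P) : 3 ∉ P := by
  rcases hg 2 (by omega) with h | h
  · exact absurd h2 h
  · simpa using h

lemma rho_ge4 (hpos : ∀ x ∈ P, 0 < x) (hg : good2 P) (h2 : 2 ∈ P)
    {x : ℕ} (hx : x ∈ rho P) : 4 ≤ x := by
  obtain ⟨hxP, hx2⟩ := mem_rho.mp hx
  have h0 := hpos x hxP
  have h1 : x ≠ 1 := by rintro rfl; exact no1 hg h2 hxP
  have h3 : x ≠ 3 := by rintro rfl; exact no3 hg h2 hxP
  omega

lemma b_facts (hpos : ∀ x ∈ P, 0 < x) (hg : good2 P) (h2 : 2 ∈ P)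
    (hne : rho P ≠ 0) :
    4 ≤ (rho P).sup ∧ (rho P).sup ∈ P ∧ ∀ x ∈ P, x ≤ (rho P).sup := by
  have hm : (rho P).sup ∈ rho P := sup_mem hne
  have h4 : 4 ≤ (rho P).sup := rho_ge4 hpos hg h2 hm
  refine ⟨h4, (mem_rho.mp hm).1, ?_⟩
  intro x hx
  by_cases hx2 : x = 2
  · omega
  · exact Multiset.le_sup (mem_rho.mpr ⟨hx, hx2⟩)

lemma step2_of_no2 (h2 : 2 ∉ P) : step2 P = 1 ::ₘ P := by
  rw [step2, if_neg h2]

lemma step2_of_b (h2 : 2 ∈ P)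
    (hb : (rho P) ≠ 0 ∧ (rho P).count (rho P).sup = 1) :
    step2 P = ((rho P).sup + 1) ::ₘ P.erase (rho P).sup := by
  rw [step2, if_pos h2, if_pos hb]

lemma step2_of_c (h2 : 2 ∈ P)
    (hb : ¬((rho P) ≠ 0 ∧ (rho P).count (rho P).sup = 1)) :
    step2 P = ((rho P).sup + 2 * P.count 2 + 1) ::ₘ (rho P).erase (rho P).sup := by
  rw [step2, if_pos h2, if_neg hb]

lemma c_facts (h2 : 2 ∈ P)
    (hb : ¬((rho P) ≠ 0 ∧ (rho P).count (rho P).sup = 1)) :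
    rho P = 0 ∨ 2 ≤ (rho P).count (rho P).sup := by
  by_cases hne : rho P = 0
  · exact Or.inl hne
  · right
    have h1 : 0 < (rho P).count (rho P).sup := Multiset.count_pos.mpr (sup_mem hne)
    have : (rho P).count (rho P).sup ≠ 1 := fun hc => hb ⟨hne, hc⟩
    omega

lemma count_eq_split (P : Multiset ℕ) {M : ℕ} (h4 : M ≠ 2) :
    P.count M = (rho P).count M := by
  have hs : (Multiset.replicate (P.count 2) 2 + rho P).count M
      = (Multiset.replicate (P.count 2) 2).count M + (rho P).count M :=
    Multiset.count_add _ _ _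
  rw [← P_eq_split P, Multiset.count_replicate, if_neg (by omega)] at hs
  omega

lemma step2_sum (hpos : ∀ x ∈ P, 0 < x) (hg : good2 P) :
    (step2 P).sum = P.sum + 1 := by
  by_cases h2 : 2 ∈ P
  · by_cases hb : (rho P) ≠ 0 ∧ (rho P).count (rho P).sup = 1
    · rw [step2_of_b h2 hb, Multiset.sum_cons]
      obtain ⟨h4, hMP, _⟩ := b_facts hpos hg h2 hb.1
      have hsum : P.sum = (rho P).sup + (P.erase (rho P).sup).sum := by
        conv_lhs => rw [← Multiset.cons_erase hMP]
        rw [Multiset.sum_cons]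
      omega
    · rw [step2_of_c h2 hb, Multiset.sum_cons]
      have hPsum := sum_P P
      rcases c_facts h2 hb with hne | hcnt
      · rw [hne] at hPsum
        simp only [Multiset.sum_zero] at hPsum
        simp only [hne, Multiset.sup_zero, Nat.bot_eq_zero, Multiset.erase_zero,
          Multiset.sum_zero]
        omega
      · have hmem : (rho P).sup ∈ rho P :=
          Multiset.count_pos.mp (by omega)
        have hrsum : (rho P).sum = (rho P).sup + ((rho P).erase (rho P).sup).sum := by
          conv_lhs => rw [← Multiset.cons_erase hmem]
          rw [Multiset.sum_cons]
        omega
  · rw [step2_of_no2 h2, Multiset.sum_cons]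
    omega

lemma step2_pos (hpos : ∀ x ∈ P, 0 < x) : ∀ x ∈ step2 P, 0 < x := by
  intro x hx
  by_cases h2 : 2 ∈ P
  · by_cases hb : (rho P) ≠ 0 ∧ (rho P).count (rho P).sup = 1
    · rw [step2_of_b h2 hb] at hx
      rcases Multiset.mem_cons.mp hx with rfl | hx
      · omega
      · exact hpos x (Multiset.mem_of_mem_erase hx)
    · rw [step2_of_c h2 hb] at hx
      rcases Multiset.mem_cons.mp hx with rfl | hx
      · omega
      · exact hpos x (mem_rho.mp (Multiset.mem_of_mem_erase hx)).1
  · rw [step2_of_no2 h2] at hx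
    rcases Multiset.mem_cons.mp hx with rfl | hx
    · omega
    · exact hpos x hx

end

section
variable {P : Multiset ℕ}

lemma step2_good (hpos : ∀ x ∈ P, 0 < x) (hg : good2 P) : good2 (step2 P) := by
  by_cases h2 : 2 ∈ P
  · by_cases hb : (rho P) ≠ 0 ∧ (rho P).count (rho P).sup = 1
    · obtain ⟨h4, hMP, hle⟩ := b_facts hpos hg h2 hb.1
      rw [step2_of_b h2 hb]
      have hcnt : P.count (rho P).sup = 1 := by
        rw [count_eq_split P (by omega)]; exact hb.2
      have hMnotin : (rho P).sup ∉ P.erase (rho P).sup := by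
        have hc0 : (P.erase (rho P).sup).count (rho P).sup = 0 := by
          rw [Multiset.count_erase_self, hcnt]
        exact Multiset.count_eq_zero.mp hc0
      have hmemQ : ∀ x : ℕ, x ∈ ((rho P).sup + 1) ::ₘ P.erase (rho P).sup →
          x = (rho P).sup + 1 ∨ (x ∈ P ∧ x ≠ (rho P).sup) := by
        intro x hx
        rcases Multiset.mem_cons.mp hx with rfl | hx
        · exact Or.inl rfl
        · exact Or.inr ⟨Multiset.mem_of_mem_erase hx, fun h => hMnotin (h ▸ hx)⟩
      intro j hj
      rcases lt_trichotomy j (rho P).sup with hjM | hjM | hjM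
      · rcases hg j hj with h | h
        · left; intro hx
          rcases hmemQ j hx with he | ⟨hxP, _⟩
          · omega
          · exact h hxP
        · right; intro hx
          rcases hmemQ (j+1) hx with he | ⟨hxP, _⟩
          · omega
          · exact h hxP
      · left; intro hx
        rcases hmemQ j hx with he | ⟨_, hne'⟩
        · omega
        · exact hne' hjM
      · rcases eq_or_ne j ((rho P).sup + 1) with rfl | hne'
        · right; intro hx
          rcases hmemQ _ hx with he | ⟨hxP, _⟩
          · omega
          · have := hle _ hxP; omega
        · left; intro hx
          rcases hmemQ _ hx with he | ⟨hxP, _⟩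
          · omega
          · have := hle _ hxP; omega
    · rw [step2_of_c h2 hb]
      have hm1 : 0 < P.count 2 := Multiset.count_pos.mpr h2
      have hRfacts : ∀ x ∈ (rho P).erase (rho P).sup, x ≤ (rho P).sup ∧ x ∈ P := by
        intro x hx
        have hxr := Multiset.mem_of_mem_erase hx
        exact ⟨Multiset.le_sup hxr, (mem_rho.mp hxr).1⟩
      intro j hj
      by_cases hjM : j + 1 ≤ (rho P).sup + 1
      · rcases hg j hj with h | h
        · left; intro hx
          rcases Multiset.mem_cons.mp hx with he | hx
          · omega
          · exact h (hRfacts _ hx).2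
        · right; intro hx
          rcases Multiset.mem_cons.mp hx with he | hx
          · omega
          · exact h (hRfacts _ hx).2
      · rcases eq_or_ne j ((rho P).sup + 2 * P.count 2 + 1) with rfl | hne'
        · right; intro hx
          rcases Multiset.mem_cons.mp hx with he | hx
          · omega
          · have := (hRfacts _ hx).1; omega
        · left; intro hx
          rcases Multiset.mem_cons.mp hx with he | hx
          · omega
          · have := (hRfacts _ hx).1; omega
  · rw [step2_of_no2 h2]
    intro j hj
    rcases eq_or_ne j 1 with rfl | hj1
    · right; intro hx
      rcases Multiset.mem_cons.mp hx with he | hx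
      · omega
      · exact h2 hx
    · rcases hg j hj with h | h
      · left; intro hx
        rcases Multiset.mem_cons.mp hx with he | hx
        · omega
        · exact h hx
      · right; intro hx
        rcases Multiset.mem_cons.mp hx with he | hx
        · omega
        · exact h hx

lemma one_notMem_step2 (hpos : ∀ x ∈ P, 0 < x) (hg : good2 P) (h2 : 2 ∈ P) :
    1 ∉ step2 P := by
  by_cases hb : (rho P) ≠ 0 ∧ (rho P).count (rho P).sup = 1
  · rw [step2_of_b h2 hb]
    obtain ⟨h4, _, _⟩ := b_facts hpos hg h2 hb.1
    intro hx
    rcases Multiset.mem_cons.mp hx with he | hx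
    · omega
    · exact no1 hg h2 (Multiset.mem_of_mem_erase hx)
  · rw [step2_of_c h2 hb]
    intro hx
    have hm1 : 0 < P.count 2 := Multiset.count_pos.mpr h2
    rcases Multiset.mem_cons.mp hx with he | hx
    · omega
    · have := rho_ge4 hpos hg h2 (Multiset.mem_of_mem_erase hx); omega

lemma two_mem_step2_b (hpos : ∀ x ∈ P, 0 < x) (hg : good2 P) (h2 : 2 ∈ P)
    (hb : (rho P) ≠ 0 ∧ (rho P).count (rho P).sup = 1) : 2 ∈ step2 P := by
  rw [step2_of_b h2 hb]
  obtain ⟨h4, _, _⟩ := b_facts hpos hg h2 hb.1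
  exact Multiset.mem_cons_of_mem ((Multiset.mem_erase_of_ne (by omega)).mpr h2)

lemma two_notMem_step2_c (hpos : ∀ x ∈ P, 0 < x) (hg : good2 P) (h2 : 2 ∈ P)
    (hb : ¬((rho P) ≠ 0 ∧ (rho P).count (rho P).sup = 1)) : 2 ∉ step2 P := by
  rw [step2_of_c h2 hb]
  intro hx
  have hm1 : 0 < P.count 2 := Multiset.count_pos.mpr h2
  rcases Multiset.mem_cons.mp hx with he | hx
  · omega
  · have := rho_ge4 hpos hg h2 (Multiset.mem_of_mem_erase hx); omega

lemma sup_cons_of_le {a : ℕ} {s : Multiset ℕ} (h : ∀ x ∈ s, x ≤ a) :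
    (a ::ₘ s).sup = a := by
  rw [Multiset.sup_cons]
  exact sup_eq_left.mpr (Multiset.sup_le.mpr h)

end

lemma step2_inj {P Q : Multiset ℕ} (hPpos : ∀ x ∈ P, 0 < x) (hPg : good2 P)
    (hQpos : ∀ x ∈ Q, 0 < x) (hQg : good2 Q) (h : step2 P = step2 Q) : P = Q := by
  by_cases hP2 : 2 ∈ P
  · by_cases hQ2 : 2 ∈ Q
    · by_cases hPb : (rho P) ≠ 0 ∧ (rho P).count (rho P).sup = 1
      · by_cases hQb : (rho Q) ≠ 0 ∧ (rho Q).count (rho Q).sup = 1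
        · -- b , b
          obtain ⟨hP4, hPM, hPle⟩ := b_facts hPpos hPg hP2 hPb.1
          obtain ⟨hQ4, hQM, hQle⟩ := b_facts hQpos hQg hQ2 hQb.1
          rw [step2_of_b hP2 hPb, step2_of_b hQ2 hQb] at h
          have hsupP : (((rho P).sup + 1) ::ₘ P.erase (rho P).sup).sup = (rho P).sup + 1 :=
            sup_cons_of_le (fun x hx =>
              le_trans (hPle _ (Multiset.mem_of_mem_erase hx)) (by omega))
          have hsupQ : (((rho Q).sup + 1) ::ₘ Q.erase (rho Q).sup).sup = (rho Q).sup + 1 :=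
            sup_cons_of_le (fun x hx =>
              le_trans (hQle _ (Multiset.mem_of_mem_erase hx)) (by omega))
          have hMM : (rho P).sup = (rho Q).sup := by
            have h' := hsupP
            rw [h, hsupQ] at h'
            omega
          rw [hMM] at h
          have h' : P.erase (rho Q).sup = Q.erase (rho Q).sup :=
            (Multiset.cons_inj_right _).mp h
          calc P = (rho Q).sup ::ₘ P.erase (rho Q).sup := by
                rw [← hMM]; exact (Multiset.cons_erase hPM).symm
            _ = (rho Q).sup ::ₘ Q.erase (rho Q).sup := by rw [h']
            _ = Q := Multiset.cons_erase hQM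
        · -- b , c : impossible
          have h2P : 2 ∈ step2 P := two_mem_step2_b hPpos hPg hP2 hPb
          rw [h] at h2P
          exact absurd h2P (two_notMem_step2_c hQpos hQg hQ2 hQb)
      · by_cases hQb : (rho Q) ≠ 0 ∧ (rho Q).count (rho Q).sup = 1
        · -- c , b : impossible
          have h2Q : 2 ∈ step2 Q := two_mem_step2_b hQpos hQg hQ2 hQb
          rw [← h] at h2Q
          exact absurd h2Q (two_notMem_step2_c hPpos hPg hP2 hPb)
        · -- c , c
          rw [step2_of_c hP2 hPb, step2_of_c hQ2 hQb] at h
          have hmP : 0 < P.count 2 := Multiset.count_pos.mpr hP2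
          have hmQ : 0 < Q.count 2 := Multiset.count_pos.mpr hQ2
          have hRPle : ∀ x ∈ (rho P).erase (rho P).sup, x ≤ (rho P).sup :=
            fun x hx => Multiset.le_sup (Multiset.mem_of_mem_erase hx)
          have hRQle : ∀ x ∈ (rho Q).erase (rho Q).sup, x ≤ (rho Q).sup :=
            fun x hx => Multiset.le_sup (Multiset.mem_of_mem_erase hx)
          have hsupP : (((rho P).sup + 2 * P.count 2 + 1) ::ₘ (rho P).erase (rho P).sup).sup
              = (rho P).sup + 2 * P.count 2 + 1 :=
            sup_cons_of_le (fun x hx => le_trans (hRPle _ hx) (by omega))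
          have hsupQ : (((rho Q).sup + 2 * Q.count 2 + 1) ::ₘ (rho Q).erase (rho Q).sup).sup
              = (rho Q).sup + 2 * Q.count 2 + 1 :=
            sup_cons_of_le (fun x hx => le_trans (hRQle _ hx) (by omega))
          have hVV : (rho P).sup + 2 * P.count 2 + 1 = (rho Q).sup + 2 * Q.count 2 + 1 := by
            rw [← hsupP, h, hsupQ]
          rw [hVV] at h
          have hRR : (rho P).erase (rho P).sup = (rho Q).erase (rho Q).sup :=
            (Multiset.cons_inj_right _).mp h
          rcases c_facts hP2 hPb with hPe | hPc
          · -- rho P = 0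
            have hRP0 : (rho P).erase (rho P).sup = 0 := by
              rw [hPe]; exact Multiset.erase_zero _
            have hRQ0 : (rho Q).erase (rho Q).sup = 0 := by rw [← hRR]; exact hRP0
            have hQe : rho Q = 0 := by
              by_contra hne
              rcases c_facts hQ2 hQb with h0 | hc
              · exact hne h0
              · have hmem : (rho Q).sup ∈ (rho Q).erase (rho Q).sup :=
                  Multiset.count_pos.mp (by rw [Multiset.count_erase_self]; omega)
                rw [hRQ0] at hmem
                exact Multiset.notMem_zero _ hmem
            have hMP0 : (rho P).sup = 0 := by
              rw [hPe, Multiset.sup_zero]; exact Nat.bot_eq_zero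
            have hMQ0 : (rho Q).sup = 0 := by
              rw [hQe, Multiset.sup_zero]; exact Nat.bot_eq_zero
            have hmm : P.count 2 = Q.count 2 := by omega
            calc P = Multiset.replicate (P.count 2) 2 + rho P := P_eq_split P
              _ = Multiset.replicate (Q.count 2) 2 + rho Q := by rw [hPe, hQe, hmm]
              _ = Q := (P_eq_split Q).symm
          · -- count (rho P).sup ≥ 2
            have hMPmem : (rho P).sup ∈ (rho P).erase (rho P).sup :=
              Multiset.count_pos.mp (by rw [Multiset.count_erase_self]; omega)
            rcases c_facts hQ2 hQb with hQe | hQc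
            · have hRQ0 : (rho Q).erase (rho Q).sup = 0 := by
                rw [hQe]; exact Multiset.erase_zero _
              rw [hRR, hRQ0] at hMPmem
              exact absurd hMPmem (Multiset.notMem_zero _)
            · have hMQmem : (rho Q).sup ∈ (rho Q).erase (rho Q).sup :=
                Multiset.count_pos.mp (by rw [Multiset.count_erase_self]; omega)
              have hMPR : ((rho P).erase (rho P).sup).sup = (rho P).sup :=
                le_antisymm (Multiset.sup_le.mpr hRPle) (Multiset.le_sup hMPmem)
              have hMQR : ((rho Q).erase (rho Q).sup).sup = (rho Q).sup :=
                le_antisymm (Multiset.sup_le.mpr hRQle) (Multiset.le_sup hMQmem)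
              have hMM : (rho P).sup = (rho Q).sup := by rw [← hMPR, hRR, hMQR]
              have hmm : P.count 2 = Q.count 2 := by omega
              have hPmem' : (rho P).sup ∈ rho P := Multiset.count_pos.mp (by omega)
              have hQmem' : (rho Q).sup ∈ rho Q := Multiset.count_pos.mp (by omega)
              have hrho : rho P = rho Q := by
                calc rho P = (rho P).sup ::ₘ (rho P).erase (rho P).sup :=
                      (Multiset.cons_erase hPmem').symm
                  _ = (rho Q).sup ::ₘ (rho Q).erase (rho Q).sup := by rw [hRR, hMM]
                  _ = rho Q := Multiset.cons_erase hQmem'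
              calc P = Multiset.replicate (P.count 2) 2 + rho P := P_eq_split P
                _ = Multiset.replicate (Q.count 2) 2 + rho Q := by rw [hrho, hmm]
                _ = Q := (P_eq_split Q).symm
    · -- P case 2, Q case 1
      have h1Q : 1 ∈ step2 Q := by
        rw [step2_of_no2 hQ2]; exact Multiset.mem_cons_self _ _
      rw [← h] at h1Q
      exact absurd h1Q (one_notMem_step2 hPpos hPg hP2)
  · by_cases hQ2 : 2 ∈ Q
    · have h1P : 1 ∈ step2 P := by
        rw [step2_of_no2 hP2]; exact Multiset.mem_cons_self _ _
      rw [h] at h1P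
      exact absurd h1P (one_notMem_step2 hQpos hQg hQ2)
    · rw [step2_of_no2 hP2, step2_of_no2 hQ2] at h
      exact (Multiset.cons_inj_right _).mp h

/-! ### The `k ≥ 3` step -/

def goodk (k : ℕ) (S : Multiset ℕ) : Prop := ∀ j : ℕ, 1 ≤ j → ∃ i < k, (j + i) ∉ S

open Classical in
noncomputable def stepg (k : ℕ) (P : Multiset ℕ) : Multiset ℕ :=
  if 1 ∉ P ∧ ∀ t ∈ Finset.Icc 2 k, t ∈ P then 3 ::ₘ P.erase 2 else 1 ::ₘ P

section
variable {k : ℕ} {P : Multiset ℕ}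

lemma stepg_of_pos (h : 1 ∉ P ∧ ∀ t ∈ Finset.Icc 2 k, t ∈ P) :
    stepg k P = 3 ::ₘ P.erase 2 := by unfold stepg; rw [if_pos h]

lemma stepg_of_neg (h : ¬(1 ∉ P ∧ ∀ t ∈ Finset.Icc 2 k, t ∈ P)) :
    stepg k P = 1 ::ₘ P := by unfold stepg; rw [if_neg h]

lemma two_mem_of_pos (hk : 3 ≤ k) (h : 1 ∉ P ∧ ∀ t ∈ Finset.Icc 2 k, t ∈ P) :
    2 ∈ P := h.2 2 (Finset.mem_Icc.mpr ⟨le_rfl, by omega⟩)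

lemma three_mem_of_pos (hk : 3 ≤ k) (h : 1 ∉ P ∧ ∀ t ∈ Finset.Icc 2 k, t ∈ P) :
    3 ∈ P := h.2 3 (Finset.mem_Icc.mpr ⟨by omega, hk⟩)

lemma stepg_subset (hk : 3 ≤ k) (h : 1 ∉ P ∧ ∀ t ∈ Finset.Icc 2 k, t ∈ P) :
    ∀ x ∈ (3 ::ₘ P.erase 2), x ∈ P := by
  intro x hx
  rcases Multiset.mem_cons.mp hx with rfl | hx
  · exact three_mem_of_pos hk h
  · exact Multiset.mem_of_mem_erase hx

lemma stepg_sum (hk : 3 ≤ k) : (stepg k P).sum = P.sum + 1 := by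
  by_cases h : 1 ∉ P ∧ ∀ t ∈ Finset.Icc 2 k, t ∈ P
  · rw [stepg_of_pos h, Multiset.sum_cons]
    have h2P := two_mem_of_pos hk h
    have : P.sum = 2 + (P.erase 2).sum := by
      conv_lhs => rw [← Multiset.cons_erase h2P]
      rw [Multiset.sum_cons]
    omega
  · rw [stepg_of_neg h, Multiset.sum_cons]
    omega

lemma stepg_pos (hk : 3 ≤ k) (hpos : ∀ x ∈ P, 0 < x) : ∀ x ∈ stepg k P, 0 < x := by
  intro x hx
  by_cases h : 1 ∉ P ∧ ∀ t ∈ Finset.Icc 2 k, t ∈ P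
  · rw [stepg_of_pos h] at hx
    exact hpos x (stepg_subset hk h x hx)
  · rw [stepg_of_neg h] at hx
    rcases Multiset.mem_cons.mp hx with rfl | hx
    · omega
    · exact hpos x hx

lemma stepg_good (hk : 3 ≤ k) (hg : goodk k P) : goodk k (stepg k P) := by
  by_cases h : 1 ∉ P ∧ ∀ t ∈ Finset.Icc 2 k, t ∈ P
  · rw [stepg_of_pos h]
    intro j hj
    obtain ⟨i, hik, hni⟩ := hg j hj
    exact ⟨i, hik, fun hx => hni (stepg_subset hk h _ hx)⟩
  · rw [stepg_of_neg h]
    intro j hj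
    obtain ⟨i, hik, hni⟩ := hg j hj
    rcases eq_or_ne (j + i) 1 with he | hne
    · -- j = 1, i = 0, 1 ∉ P
      have hj1 : j = 1 := by omega
      have h1P : 1 ∉ P := by rw [← he]; exact hni
      push_neg at h
      obtain ⟨t, htI, htP⟩ := h h1P
      obtain ⟨ht2, htk⟩ := Finset.mem_Icc.mp htI
      refine ⟨t - 1, by omega, ?_⟩
      intro hx
      rcases Multiset.mem_cons.mp hx with hee | hx
      · omega
      · rw [hj1] at hx
        have : 1 + (t - 1) = t := by omega
        rw [this] at hx
        exact htP hx
    · refine ⟨i, hik, ?_⟩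
      intro hx
      rcases Multiset.mem_cons.mp hx with hee | hx
      · exact hne hee
      · exact hni hx

lemma stepg_inj (hk : 3 ≤ k) {P Q : Multiset ℕ}
    (h : stepg k P = stepg k Q) : P = Q := by
  by_cases hP : 1 ∉ P ∧ ∀ t ∈ Finset.Icc 2 k, t ∈ P
  · by_cases hQ : 1 ∉ Q ∧ ∀ t ∈ Finset.Icc 2 k, t ∈ Q
    · rw [stepg_of_pos hP, stepg_of_pos hQ] at h
      have h' : P.erase 2 = Q.erase 2 := (Multiset.cons_inj_right _).mp h
      calc P = 2 ::ₘ P.erase 2 := (Multiset.cons_erase (two_mem_of_pos hk hP)).symm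
        _ = 2 ::ₘ Q.erase 2 := by rw [h']
        _ = Q := Multiset.cons_erase (two_mem_of_pos hk hQ)
    · rw [stepg_of_pos hP, stepg_of_neg hQ] at h
      have h1 : (1 : ℕ) ∈ 3 ::ₘ P.erase 2 := by
        rw [h]; exact Multiset.mem_cons_self _ _
      rcases Multiset.mem_cons.mp h1 with hee | hx
      · omega
      · exact absurd (Multiset.mem_of_mem_erase hx) hP.1
  · by_cases hQ : 1 ∉ Q ∧ ∀ t ∈ Finset.Icc 2 k, t ∈ Q
    · rw [stepg_of_neg hP, stepg_of_pos hQ] at h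
      have h1 : (1 : ℕ) ∈ 3 ::ₘ Q.erase 2 := by
        rw [← h]; exact Multiset.mem_cons_self _ _
      rcases Multiset.mem_cons.mp h1 with hee | hx
      · omega
      · exact absurd (Multiset.mem_of_mem_erase hx) hQ.1
    · rw [stepg_of_neg hP, stepg_of_neg hQ] at h
      exact (Multiset.cons_inj_right _).mp h

end

lemma good2_iff {S : Multiset ℕ} :
    (∀ j : ℕ, 1 ≤ j → ∃ i < 2, (j + i) ∉ S) ↔ good2 S := by
  constructor
  · intro h j hj
    obtain ⟨i, hi, hni⟩ := h j hj
    interval_cases i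
    · left; simpa using hni
    · right; exact hni
  · intro h j hj
    rcases h j hj with hh | hh
    · exact ⟨0, by omega, by simpa using hh⟩
    · exact ⟨1, by omega, hh⟩

lemma card_le_two (n : ℕ) :
    Nat.card {p : Nat.Partition n // ∀ j : ℕ, 1 ≤ j → ∃ i < 2, (j + i) ∉ p.parts}
      ≤ Nat.card {p : Nat.Partition (n + 1) // ∀ j : ℕ, 1 ≤ j → ∃ i < 2, (j + i) ∉ p.parts} := by
  apply Nat.card_le_card_of_injective
    (fun p =>
      (⟨⟨step2 p.1.parts,
        fun hx => step2_pos (fun _ hxx => p.1.parts_pos hxx) _ hx,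
        by rw [step2_sum (fun _ hxx => p.1.parts_pos hxx) (good2_iff.mp p.2), p.1.parts_sum]⟩,
       good2_iff.mpr (step2_good (fun _ hxx => p.1.parts_pos hxx) (good2_iff.mp p.2))⟩ :
       {p : Nat.Partition (n + 1) // ∀ j : ℕ, 1 ≤ j → ∃ i < 2, (j + i) ∉ p.parts}))
  intro a b hab
  have h1 : step2 a.1.parts = step2 b.1.parts :=
    congrArg (fun q : {p : Nat.Partition (n + 1) // ∀ j : ℕ, 1 ≤ j → ∃ i < 2, (j + i) ∉ p.parts}
      => q.1.parts) hab
  exact Subtype.ext (Nat.Partition.ext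
    (step2_inj (fun _ hxx => a.1.parts_pos hxx) (good2_iff.mp a.2)
      (fun _ hxx => b.1.parts_pos hxx) (good2_iff.mp b.2) h1))

lemma card_le_ge3 {k : ℕ} (hk : 3 ≤ k) (n : ℕ) :
    Nat.card {p : Nat.Partition n // ∀ j : ℕ, 1 ≤ j → ∃ i < k, (j + i) ∉ p.parts}
      ≤ Nat.card {p : Nat.Partition (n + 1) // ∀ j : ℕ, 1 ≤ j → ∃ i < k, (j + i) ∉ p.parts} := by
  apply Nat.card_le_card_of_injective
    (fun p =>
      (⟨⟨stepg k p.1.parts,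
        fun hx => stepg_pos hk (fun _ hxx => p.1.parts_pos hxx) _ hx,
        by rw [stepg_sum hk, p.1.parts_sum]⟩,
       stepg_good hk p.2⟩ :
       {p : Nat.Partition (n + 1) // ∀ j : ℕ, 1 ≤ j → ∃ i < k, (j + i) ∉ p.parts}))
  intro a b hab
  have h1 : stepg k a.1.parts = stepg k b.1.parts :=
    congrArg (fun q : {p : Nat.Partition (n + 1) // ∀ j : ℕ, 1 ≤ j → ∃ i < k, (j + i) ∉ p.parts}
      => q.1.parts) hab
  exact Subtype.ext (Nat.Partition.ext (stepg_inj hk h1))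

end Stmt18

/-- `p_k(n)` is nondecreasing in `n`: the coefficients of `(1-q) G_k(q)` are
nonnegative. -/
theorem stmt_18 (k : ℕ) (hk : 2 ≤ k) :
    ∀ n : ℕ, noKSeqPartitions k n ≤ noKSeqPartitions k (n + 1) := by
  intro n
  unfold noKSeqPartitions
  rcases eq_or_lt_of_le hk with hk2 | hk3
  · subst hk2
    exact Stmt18.card_le_two n
  · exact Stmt18.card_le_ge3 hk3 n
end

section
/- For a partition λ with no k consecutive part sizes and all parts ≤ N, if n_1 < n_2 < ⋯ are the part sizes in {1,…,N} missing from λ, and ℓ = ∑_{runs}(k − length of run) where runs are the maximal blocks of consecutive present part-sizes, then the number of missing part sizes equals ⌊(N+ℓ)/k⌋, and n_i = ki − |{j : t_j ≤ i}| where t_1 ≤ ⋯ ≤ t_ℓ records the shortenings of the runs. -/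
/-! The missing sizes `n_0 = 0 < n_1 < ⋯ < n_M` have gaps of at most `k`, since each run of
present sizes is shorter than `k`, and `N < n_M + k` for the same reason. Hence the
shortenings `L m = ∑_{i ≤ m} (k - (n_i - n_{i-1}))` telescope to `n_m + L m = k m`, which gives
both `M = ⌊(N + L M)/k⌋` and `n_i = k i - L i`. Finally `L i` is the number of `j` with
`t_j ≤ i` once `t_j` is taken to be the least `m` with `j < L m`. -/

theorem Monotone.exists_monotone_card_filter_le {L : ℕ → ℕ} (hL : Monotone L) (m : ℕ) :
    ∃ t : Fin (L m) → ℕ, Monotone t ∧ (∀ j, t j ≤ m) ∧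
      ∀ i ≤ m, (Finset.univ.filter fun j => t j ≤ i).card = L i := by
  have hex : ∀ j : Fin (L m), ∃ i, (j : ℕ) < L i := fun j => ⟨m, j.isLt⟩
  have hle_iff : ∀ j i, Nat.find (hex j) ≤ i ↔ (j : ℕ) < L i := fun j i =>
    ⟨fun h => (Nat.find_spec (hex j)).trans_le (hL h), Nat.find_min' (hex j)⟩
  refine ⟨fun j => Nat.find (hex j), fun a b hab => ?_, fun j => Nat.find_min' (hex j) j.isLt,
    fun i hi => ?_⟩
  · exact (hle_iff a _).2 (lt_of_le_of_lt hab ((hle_iff b _).1 le_rfl))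
  · simp only [hle_iff, Fin.card_filter_val_lt, min_eq_right (hL hi)]

theorem add_sum_Icc_sub_sub_eq_mul {f : ℕ → ℕ} {k m : ℕ} (h0 : f 0 = 0)
    (hf : ∀ i < m, f i ≤ f (i + 1) ∧ f (i + 1) ≤ f i + k) :
    f m + ∑ i ∈ Finset.Icc 1 m, (k - (f i - f (i - 1))) = k * m := by
  induction m with
  | zero => simp [h0]
  | succ m ih =>
    have ih := ih fun i hi => hf i (by omega)
    have hm := hf m (by omega)
    rw [Finset.sum_Icc_succ_top (by omega), Nat.add_sub_cancel, Nat.mul_succ]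
    omega

section Enumeration

variable {D : Set ℕ} {M : ℕ} {nn : ℕ → ℕ}

theorem StrictMonoOn.lt_and_succ_le_of_lt (hmono : StrictMonoOn nn (Set.Icc 0 M))
    (hsurj : ∀ x ∈ D, ∃ i : ℕ, 1 ≤ i ∧ i ≤ M ∧ nn i = x) {i x : ℕ} (hx : x ∈ D) (hi : i ≤ M)
    (hix : nn i < x) : i < M ∧ nn (i + 1) ≤ x := by
  obtain ⟨j, -, hjM, rfl⟩ := hsurj x hx
  have hij : i < j := (hmono.lt_iff_lt ⟨i.zero_le, hi⟩ ⟨j.zero_le, hjM⟩).1 hix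
  exact ⟨by omega, (hmono.le_iff_le ⟨by omega, by omega⟩ ⟨j.zero_le, hjM⟩).2 hij⟩

end Enumeration

section NoKSequence

variable {k N M : ℕ} {S : Finset ℕ} {nn : ℕ → ℕ}

theorem exists_mem_sdiff_of_add_le (hnoseq : ∀ j : ℕ, 1 ≤ j → ∃ i < k, j + i ∉ S) {a : ℕ}
    (ha : a + k ≤ N) : ∃ x ∈ Finset.Icc 1 N \ S, a < x ∧ x ≤ a + k := by
  obtain ⟨i, hik, hiS⟩ := hnoseq (a + 1) (by omega)
  exact ⟨a + 1 + i, Finset.mem_sdiff.2 ⟨Finset.mem_Icc.2 ⟨by omega, by omega⟩, hiS⟩,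
    by omega, by omega⟩

variable (hnoseq : ∀ j : ℕ, 1 ≤ j → ∃ i < k, j + i ∉ S)
  (hmono : StrictMonoOn nn (Set.Icc 0 M))
  (hsurj : ∀ x ∈ Finset.Icc 1 N \ S, ∃ i : ℕ, 1 ≤ i ∧ i ≤ M ∧ nn i = x)
include hnoseq hmono hsurj

theorem succ_le_add_of_noKSequence {i : ℕ} (hi : i < M) (hN : nn (i + 1) ≤ N) :
    nn (i + 1) ≤ nn i + k := by
  by_contra! h
  obtain ⟨x, hx, hix, hxk⟩ := exists_mem_sdiff_of_add_le hnoseq (N := N) (a := nn i) (by omega)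
  have := (hmono.lt_and_succ_le_of_lt hsurj hx hi.le hix).2
  omega

theorem lt_add_of_noKSequence : N < nn M + k := by
  by_contra! h
  obtain ⟨x, hx, hMx, -⟩ := exists_mem_sdiff_of_add_le hnoseq h
  exact (hmono.lt_and_succ_le_of_lt hsurj hx le_rfl hMx).1.false

end NoKSequence

theorem stmt_19_general (k N : ℕ)
    (S : Finset ℕ)
    (hnoseq : ∀ j : ℕ, 1 ≤ j → ∃ i < k, j + i ∉ S)
    (M : ℕ)
    (nn : ℕ → ℕ) (hnn0 : nn 0 = 0)
    (hmem : ∀ i : ℕ, 1 ≤ i → i ≤ M → nn i ∈ Finset.Icc 1 N \ S)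
    (hmono : StrictMonoOn nn (Set.Icc 0 M))
    (hsurj : ∀ x ∈ Finset.Icc 1 N \ S, ∃ i : ℕ, 1 ≤ i ∧ i ≤ M ∧ nn i = x) :
    M = (N + ∑ i ∈ Finset.Icc 1 M, (k - (nn i - nn (i - 1)))) / k ∧
    ∃ t : Fin (∑ i ∈ Finset.Icc 1 M, (k - (nn i - nn (i - 1)))) → ℕ,
      Monotone t ∧ (∀ j, t j ≤ M) ∧
      ∀ i : ℕ, 1 ≤ i → i ≤ M →
        nn i = k * i - (Finset.univ.filter fun j => t j ≤ i).card := by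
  have hle_N : ∀ i ≤ M, nn i ≤ N := fun i hi => by
    rcases i.eq_zero_or_pos with rfl | h1
    · simp [hnn0]
    · exact (Finset.mem_Icc.1 (Finset.mem_sdiff.1 (hmem i h1 hi)).1).2
  let L : ℕ → ℕ := fun m => ∑ i ∈ Finset.Icc 1 m, (k - (nn i - nn (i - 1)))
  have hL_mono : Monotone L := fun a b hab =>
    Finset.sum_le_sum_of_subset (Finset.Icc_subset_Icc_right hab)
  have htelescope : ∀ m ≤ M, nn m + L m = k * m := fun m hm =>
    add_sum_Icc_sub_sub_eq_mul hnn0 fun i hi =>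
      ⟨(hmono ⟨i.zero_le, by omega⟩ ⟨(i + 1).zero_le, by omega⟩ i.lt_succ_self).le,
        succ_le_add_of_noKSequence hnoseq hmono hsurj (by omega) (hle_N _ (by omega))⟩
  have htop := lt_add_of_noKSequence hnoseq hmono hsurj
  have hM := htelescope M le_rfl
  have hNM := hle_N M le_rfl
  obtain ⟨t, ht_mono, ht_le, ht_card⟩ := hL_mono.exists_monotone_card_filter_le M
  refine ⟨?_, t, ht_mono, ht_le, fun i _ hi => ?_⟩
  · change M = (N + L M) / k
    exact (Nat.div_eq_of_lt_le (by rw [mul_comm]; omega)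
      (by rw [Nat.succ_mul, mul_comm]; omega)).symm
  rw [ht_card i hi]
  have := htelescope i hi
  omega

/-- For a partition with no `k` consecutive part sizes and parts `≤ N`, encoded by its
set `S ⊆ {1,…,N}` of present part sizes: let `n_1 < n_2 < ⋯ < n_M` enumerate the
missing sizes (`nn 0 = 0` and `nn i = n_i` for `1 ≤ i ≤ M`), and let
`ℓ = ∑_{runs} (k - length of run)`, where the run before `n_i` has length
`nn i - nn (i-1)` in the counting of the paper.  Then the number `M` of missing part
sizes equals `⌊(N + ℓ)/k⌋`, and there is a nondecreasing sequence
`t_1 ≤ ⋯ ≤ t_ℓ` with values in `{0, …, M}` recording the shortenings of the runs,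
such that `n_i = k i - |{j : t_j ≤ i}|`. -/
theorem stmt_19 (k N : ℕ) (hk : 2 ≤ k) (hN : 1 ≤ N)
    (S : Finset ℕ) (hS : S ⊆ Finset.Icc 1 N)
    (hnoseq : ∀ j : ℕ, 1 ≤ j → ∃ i < k, j + i ∉ S)
    (M : ℕ) (hM : M = (Finset.Icc 1 N \ S).card)
    (nn : ℕ → ℕ) (hnn0 : nn 0 = 0)
    (hmem : ∀ i : ℕ, 1 ≤ i → i ≤ M → nn i ∈ Finset.Icc 1 N \ S)
    (hmono : StrictMonoOn nn (Set.Icc 0 M))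
    (hsurj : ∀ x ∈ Finset.Icc 1 N \ S, ∃ i : ℕ, 1 ≤ i ∧ i ≤ M ∧ nn i = x) :
    M = (N + ∑ i ∈ Finset.Icc 1 M, (k - (nn i - nn (i - 1)))) / k ∧
    ∃ t : Fin (∑ i ∈ Finset.Icc 1 M, (k - (nn i - nn (i - 1)))) → ℕ,
      Monotone t ∧ (∀ j, t j ≤ M) ∧
      ∀ i : ℕ, 1 ≤ i → i ≤ M →
        nn i = k * i - (Finset.univ.filter fun j => t j ≤ i).card :=
  stmt_19_general k N S hnoseq M nn hnn0 hmem hmono hsurj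
end
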